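/- arXiv:2302.05930 — 10 statements merged into one kernel-verified Lean document; each statement's English description precedes it below -/
import Mathlib

section
/- Let (Y, y) be Shor-feasible for the data (F, w), with Shor objective value ⟨Q, Y⟩ + 2dᵀy + v. Define the symmetric (n+1)×(n+1) block matrix X := [[Y, y wᵀ − Y F, y], [w yᵀ − Fᵀ Y, Fᵀ Y F − Fᵀ y wᵀ − w yᵀ F + w wᵀ, w − Fᵀ y], [yᵀ, wᵀ − yᵀ F, 1]] (blocks of sizes k, m, 1). Then X is DNN-feasible and ⟨Ĥ, X⟩ = ⟨Q, Y⟩ + 2 dᵀ y + v. (This is one direction of the equivalence between the doubly nonnegative relaxation and the Shor relaxation of the equivalent QCQP.) -/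
open Matrix

noncomputable section

/-- Frobenius (trace) inner product of real matrices. -/
def frob {ι : Type} [Fintype ι] (A B : Matrix ι ι ℝ) : ℝ := (Aᵀ * B).trace

/-- `(Y, y)` is Shor-feasible for the data `(F, w)`. -/
def ShorFeasible {k : ℕ} {ι : Type} [Fintype ι]
    (F : Matrix (Fin k) ι ℝ) (w : ι → ℝ)
    (Y : Matrix (Fin k) (Fin k) ℝ) (y : Fin k → ℝ) : Prop :=
  (∀ i, Fᵀ.mulVec y i ≤ w i) ∧
  (∀ i, 0 ≤ y i) ∧
  (∀ i j, 0 ≤ (Fᵀ * Y * F - vecMulVec w (Fᵀ.mulVec y) - vecMulVec (Fᵀ.mulVec y) w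
      + vecMulVec w w) i j) ∧
  (∀ i j, 0 ≤ Y i j) ∧
  (∀ i j, 0 ≤ (vecMulVec w y - Fᵀ * Y) i j) ∧
  (fromBlocks Y (Matrix.of fun i (_ : Unit) => y i)
    (Matrix.of fun (_ : Unit) j => y j) 1).PosSemidef

/-- The matrix `M₀ = [Fᵀ  I_m  0]`. -/
def Mzero {k m : ℕ} (F : Matrix (Fin k) (Fin m) ℝ) :
    Matrix (Fin m) ((Fin k ⊕ Fin m) ⊕ Unit) ℝ :=
  Matrix.of fun i j =>
    Sum.elim (Sum.elim (fun a => F a i) (fun b => if b = i then (1 : ℝ) else 0))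
      (fun _ => (0 : ℝ)) j

/-- `X` is feasible for the doubly nonnegative (DNN) relaxation with data `(F, w)`. -/
def DNNFeasible {k m : ℕ} (F : Matrix (Fin k) (Fin m) ℝ) (w : Fin m → ℝ)
    (X : Matrix ((Fin k ⊕ Fin m) ⊕ Unit) ((Fin k ⊕ Fin m) ⊕ Unit) ℝ) : Prop :=
  (∀ i j, 0 ≤ X i j) ∧
  X.PosSemidef ∧
  X (Sum.inr ()) (Sum.inr ()) = 1 ∧
  ((Mzero F).mulVec (fun j => X j (Sum.inr ())) = w) ∧
  (∀ i, (Mzero F * X * (Mzero F)ᵀ) i i = w i * w i)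

/-- The objective matrix `Ĥ` of the DNN relaxation. -/
def Hhat {k m : ℕ} (Q : Matrix (Fin k) (Fin k) ℝ) (d : Fin k → ℝ) (v : ℝ) :
    Matrix ((Fin k ⊕ Fin m) ⊕ Unit) ((Fin k ⊕ Fin m) ⊕ Unit) ℝ :=
  fromBlocks (fromBlocks Q 0 0 0)
    (Matrix.of fun i _ => Sum.elim d (fun _ => (0 : ℝ)) i)
    (Matrix.of fun _ j => Sum.elim d (fun _ => (0 : ℝ)) j)
    (Matrix.of fun _ _ => v)

/-- The block matrix `X` built from a Shor-feasible pair `(Y, y)`. -/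
def bigX {k m : ℕ} (F : Matrix (Fin k) (Fin m) ℝ) (w : Fin m → ℝ)
    (Y : Matrix (Fin k) (Fin k) ℝ) (y : Fin k → ℝ) :
    Matrix ((Fin k ⊕ Fin m) ⊕ Unit) ((Fin k ⊕ Fin m) ⊕ Unit) ℝ :=
  fromBlocks
    (fromBlocks Y (vecMulVec y w - Y * F)
      (vecMulVec w y - Fᵀ * Y)
      (Fᵀ * Y * F - vecMulVec (Fᵀ.mulVec y) w - vecMulVec w (Fᵀ.mulVec y)
        + vecMulVec w w))
    (Matrix.of fun i _ => Sum.elim y (fun b => w b - Fᵀ.mulVec y b) i)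
    (Matrix.of fun _ j => Sum.elim y (fun b => w b - Fᵀ.mulVec y b) j)
    (Matrix.of fun _ _ => (1 : ℝ))

/-!
The matrix `X` is the congruence transform `A Z Aᵀ` of the Shor moment matrix
`Z = [[Y, y], [yᵀ, 1]]` by `A = [[I, 0], [-Fᵀ, w], [0, 1]]`, hence positive semidefinite.
Since `M₀ A = [0 w]` and the corner entry of `Z` is `1`, moreover `M₀ X M₀ᵀ = w wᵀ`.
Every entry of `X` is one of the quantities that Shor feasibility makes nonnegative, the block
`y wᵀ - Y F` being the transpose of `w yᵀ - Fᵀ Y` because `X` is symmetric.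
-/

section

variable {k m : ℕ} {F : Matrix (Fin k) (Fin m) ℝ} {w : Fin m → ℝ}
  {Y : Matrix (Fin k) (Fin k) ℝ} {y : Fin k → ℝ}

variable (Y y) in
def shorMatrix : Matrix (Fin k ⊕ Unit) (Fin k ⊕ Unit) ℝ :=
  fromBlocks Y (replicateCol Unit y) (replicateRow Unit y) 1

variable (F w) in
def liftMatrix : Matrix ((Fin k ⊕ Fin m) ⊕ Unit) (Fin k ⊕ Unit) ℝ :=
  fromBlocks (fromRows 1 (-Fᵀ)) (fromRows 0 (replicateCol Unit w)) 0 1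

lemma ShorFeasible.posSemidef_shorMatrix (h : ShorFeasible F w Y y) :
    (shorMatrix Y y).PosSemidef :=
  h.2.2.2.2.2

lemma Mzero_eq_fromCols : Mzero F = fromCols (fromCols Fᵀ 1) 0 := by
  ext i ((a | b) | _) <;> simp [Mzero, one_apply, eq_comm]

lemma Mzero_mul_liftMatrix : Mzero F * liftMatrix F w = fromCols 0 (replicateCol Unit w) := by
  simp [Mzero_eq_fromCols, liftMatrix, fromCols_mul_fromBlocks, fromCols_mul_fromRows]

lemma bigX_eq_liftMatrix_mul_shorMatrix_mul_transpose :
    bigX F w Y y = liftMatrix F w * shorMatrix Y y * (liftMatrix F w)ᵀ := by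
  simp only [liftMatrix, shorMatrix, fromBlocks_multiply, fromBlocks_transpose, fromRows_mul,
    transpose_fromRows, Matrix.mul_one, Matrix.one_mul, Matrix.zero_mul, zero_add]
  ext ((a | b) | _) ((c | d) | _) <;>
    simp [bigX, mul_apply, vecMulVec_apply, mulVec, dotProduct, Finset.sum_mul, Finset.mul_sum,
      add_mul, Finset.sum_add_distrib] <;>
    ring_nf <;>
    simp only [mul_comm, mul_left_comm, sub_right_comm]

lemma posSemidef_bigX (hZ : (shorMatrix Y y).PosSemidef) : (bigX F w Y y).PosSemidef := by
  rw [bigX_eq_liftMatrix_mul_shorMatrix_mul_transpose]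
  simpa [conjTranspose_eq_transpose_of_trivial] using hZ.mul_mul_conjTranspose_same (liftMatrix F w)

lemma Mzero_mul_bigX_mul_transpose : Mzero F * bigX F w Y y * (Mzero F)ᵀ = vecMulVec w w := by
  have hassoc : Mzero F * (liftMatrix F w * shorMatrix Y y * (liftMatrix F w)ᵀ) * (Mzero F)ᵀ =
      Mzero F * liftMatrix F w * shorMatrix Y y * (Mzero F * liftMatrix F w)ᵀ := by
    simp only [transpose_mul, Matrix.mul_assoc]
  rw [bigX_eq_liftMatrix_mul_shorMatrix_mul_transpose, hassoc, Mzero_mul_liftMatrix]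
  simp [shorMatrix, transpose_fromCols, fromCols_mul_fromBlocks, fromCols_mul_fromRows,
    vecMulVec_eq Unit]

lemma Mzero_mulVec_bigX_col_inr : (Mzero F *ᵥ fun j => bigX F w Y y j (Sum.inr ())) = w := by
  funext i
  simp [Mzero, bigX, mulVec, dotProduct, Fintype.sum_sum_type]

lemma bigX_nonneg (h : ShorFeasible F w Y y) (i j) : 0 ≤ bigX F w Y y i j := by
  obtain ⟨hFy, hy, hFYF, hY, hwyFY, hZ⟩ := h
  have hsymm : (bigX F w Y y).IsSymm := by
    simpa [IsHermitian, IsSymm, conjTranspose_eq_transpose_of_trivial] using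
      (posSemidef_bigX hZ).isHermitian
  rcases i with (a | b) | _ <;> rcases j with (c | d) | _
  · simpa [bigX] using hY a c
  · rw [← hsymm.apply]
    simpa [bigX] using hwyFY d a
  · simpa [bigX] using hy a
  · simpa [bigX] using hwyFY b c
  · simpa [bigX, sub_right_comm] using hFYF b d
  · simpa [bigX] using hFy b
  · simpa [bigX] using hy c
  · simpa [bigX] using hFy d
  · simp [bigX]

lemma frob_Hhat_bigX (Q : Matrix (Fin k) (Fin k) ℝ) (d : Fin k → ℝ) (v : ℝ) :
    frob (Hhat (m := m) Q d v) (bigX F w Y y) = frob Q Y + 2 * (d ⬝ᵥ y) + v := by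
  simp [frob, trace, Hhat, bigX, mul_apply, Fintype.sum_sum_type, dotProduct,
    Finset.sum_add_distrib]
  ring

end

theorem shor_feasible_to_dnn_feasible_general {k m : ℕ}
    (F : Matrix (Fin k) (Fin m) ℝ) (w : Fin m → ℝ)
    (Q : Matrix (Fin k) (Fin k) ℝ) (d : Fin k → ℝ) (v : ℝ)
    (Y : Matrix (Fin k) (Fin k) ℝ) (y : Fin k → ℝ)
    (hfeas : ShorFeasible F w Y y) :
    DNNFeasible F w (bigX F w Y y) ∧
    frob (Hhat (m := m) Q d v) (bigX F w Y y) = frob Q Y + 2 * (d ⬝ᵥ y) + v := by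
  refine ⟨⟨bigX_nonneg hfeas, posSemidef_bigX hfeas.posSemidef_shorMatrix, by simp [bigX],
    Mzero_mulVec_bigX_col_inr, fun i => ?_⟩, frob_Hhat_bigX Q d v⟩
  rw [Mzero_mul_bigX_mul_transpose, vecMulVec_apply]

/-- from a Shor-feasible pair `(Y, y)`, the block matrix `X` is DNN-feasible
and has the same objective value. -/
theorem shor_feasible_to_dnn_feasible {k m : ℕ} (hk : 1 ≤ k) (hm : 1 ≤ m)
    (F : Matrix (Fin k) (Fin m) ℝ) (w : Fin m → ℝ)
    (Q : Matrix (Fin k) (Fin k) ℝ) (hQ : Q.IsSymm) (d : Fin k → ℝ) (v : ℝ)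
    (Y : Matrix (Fin k) (Fin k) ℝ) (hY : Y.IsSymm) (y : Fin k → ℝ)
    (hfeas : ShorFeasible F w Y y) :
    DNNFeasible F w (bigX F w Y y) ∧
    frob (Hhat (m := m) Q d v) (bigX F w Y y) = frob Q Y + 2 * (d ⬝ᵥ y) + v :=
  shor_feasible_to_dnn_feasible_general F w Q d v Y y hfeas
end
end

section
/- Suppose there exists y⁰ ∈ ℝ^k with Fᵀy⁰ < w strictly componentwise and y⁰ > 0 strictly componentwise. Then there exist a symmetric matrix Y ∈ ℝ^{k×k} and y ∈ ℝ^k such that: Fᵀy < w strictly componentwise; y > 0 strictly componentwise; every entry of FᵀYF − w yᵀ F − Fᵀ y wᵀ + w wᵀ is strictly positive; every entry of Y is strictly positive; every entry of w yᵀ − Fᵀ Y is strictly positive; and the (k+1)×(k+1) block matrix [[Y, y], [yᵀ, 1]] is positive definite. In other words, the Shor relaxation admits a strictly feasible solution (Slater's condition holds for the primal SDP). -/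
/-!
Take `y := y⁰` and `Y := y yᵀ + ε • 1` with `ε > 0` small. With this `Y` the lifted constraint
matrices become `(w - Fᵀy)(w - Fᵀy)ᵀ + ε FᵀF` and `(w - Fᵀy) yᵀ - ε Fᵀ`, whose unperturbed parts
are entrywise positive because `y` is strictly feasible, so they stay positive for small `ε`.
The block matrix `[[y yᵀ + ε • 1, y], [yᵀ, 1]]` is congruent to `diag(ε • 1, 1)` via the
unipotent `[[1, y], [0, 1]]`.
-/

open Matrix

noncomputable section

open Filter Topology

section

variable {R : Type*} [CommRing R] {k m : Type*} [Fintype k] [DecidableEq k]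
  (F : Matrix k m R) (w : m → R) (y : k → R) (ε : R)

lemma shor_slack_product_eq :
    Fᵀ * (vecMulVec y y + ε • 1) * F - vecMulVec w (Fᵀ *ᵥ y) - vecMulVec (Fᵀ *ᵥ y) w
      + vecMulVec w w = vecMulVec (w - Fᵀ *ᵥ y) (w - Fᵀ *ᵥ y) + ε • (Fᵀ * F) := by
  rw [Matrix.mul_add, Matrix.add_mul, mul_vecMulVec, vecMulVec_mul, ← mulVec_transpose,
    Matrix.mul_smul, Matrix.mul_one, Matrix.smul_mul]
  ext i j
  simp only [Matrix.add_apply, Matrix.sub_apply, vecMulVec_apply, Pi.sub_apply, Matrix.smul_apply,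
    smul_eq_mul]
  ring

lemma shor_slack_var_product_eq :
    vecMulVec w y - Fᵀ * (vecMulVec y y + ε • 1) = vecMulVec (w - Fᵀ *ᵥ y) y - ε • Fᵀ := by
  rw [Matrix.mul_add, mul_vecMulVec, Matrix.mul_smul, Matrix.mul_one]
  ext i j
  simp only [Matrix.add_apply, Matrix.sub_apply, vecMulVec_apply, Pi.sub_apply, Matrix.smul_apply,
    smul_eq_mul]
  ring

end

lemma eventually_forall_pos_add_smul {ι κ : Type*} [Finite ι] [Finite κ]
    {A : Matrix ι κ ℝ} (hA : ∀ i j, 0 < A i j) (B : Matrix ι κ ℝ) :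
    ∀ᶠ ε in 𝓝 (0 : ℝ), ∀ i j, 0 < (A + ε • B) i j := by
  refine eventually_all.2 fun i => eventually_all.2 fun j => ?_
  have : Tendsto (fun ε : ℝ => A i j + ε * B i j) (𝓝 0) (𝓝 (A i j)) := by
    simpa using ((continuous_mul_const (B i j)).tendsto 0).const_add (A i j)
  simpa using this.eventually_const_lt (hA i j)

lemma posDef_fromBlocks_vecMulVec_add_smul_one {n : Type*} [Fintype n] [DecidableEq n]
    (v : n → ℝ) {ε : ℝ} (hε : 0 < ε) :
    (fromBlocks (vecMulVec v v + ε • 1) (replicateCol Unit v) (replicateRow Unit v) 1).PosDef := by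
  set U : Matrix (n ⊕ Unit) (n ⊕ Unit) ℝ := fromBlocks 1 (replicateCol Unit v) 0 1
  have hU : IsUnit U := by simp [U, isUnit_iff_isUnit_det]
  have hD : (fromBlocks (ε • 1) 0 0 1 : Matrix (n ⊕ Unit) (n ⊕ Unit) ℝ).PosDef := by
    rw [← diagonal_one, ← diagonal_one, ← diagonal_smul, fromBlocks_diagonal,
      posDef_diagonal_iff]
    rintro (i | i) <;> simp [hε]
  have hconj : U * fromBlocks (ε • 1) 0 0 1 * star U =
      fromBlocks (vecMulVec v v + ε • 1) (replicateCol Unit v) (replicateRow Unit v) 1 := by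
    rw [star_eq_conjTranspose, conjTranspose_eq_transpose_of_trivial, fromBlocks_transpose,
      vecMulVec_eq Unit]
    simp [U, fromBlocks_multiply, add_comm]
  rw [← hconj]
  exact (IsUnit.posDef_star_right_conjugate_iff hU).2 hD

theorem shor_relaxation_strictly_feasible_general {k m : ℕ}
    (F : Matrix (Fin k) (Fin m) ℝ) (w : Fin m → ℝ)
    (h : ∃ y0 : Fin k → ℝ, (∀ i, Fᵀ.mulVec y0 i < w i) ∧ (∀ i, 0 < y0 i)) :
    ∃ (Y : Matrix (Fin k) (Fin k) ℝ) (y : Fin k → ℝ),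
      Y.IsSymm ∧
      (∀ i, Fᵀ.mulVec y i < w i) ∧
      (∀ i, 0 < y i) ∧
      (∀ i j, 0 < (Fᵀ * Y * F - vecMulVec w (Fᵀ.mulVec y) - vecMulVec (Fᵀ.mulVec y) w
          + vecMulVec w w) i j) ∧
      (∀ i j, 0 < Y i j) ∧
      (∀ i j, 0 < (vecMulVec w y - Fᵀ * Y) i j) ∧
      (fromBlocks Y (Matrix.of fun i (_ : Unit) => y i)
        (Matrix.of fun (_ : Unit) j => y j) 1).PosDef := by
  obtain ⟨y, hFy, hy⟩ := h
  have hslack : ∀ i, 0 < (w - Fᵀ *ᵥ y) i := fun i => sub_pos.2 (hFy i)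
  obtain ⟨ε, ⟨hprod, hmixed⟩, hε⟩ :=
    (((eventually_forall_pos_add_smul (A := vecMulVec _ _)
        (fun i j => mul_pos (hslack i) (hslack j)) (Fᵀ * F)).and
      (eventually_forall_pos_add_smul (A := vecMulVec _ y)
        (fun i j => mul_pos (hslack i) (hy j)) (-Fᵀ))).filter_mono nhdsWithin_le_nhds |>.and
      (self_mem_nhdsWithin (s := Set.Ioi 0))).exists
  refine ⟨vecMulVec y y + ε • 1, y, ?_, hFy, hy, ?_, fun i j => ?_, ?_,
    posDef_fromBlocks_vecMulVec_add_smul_one y hε⟩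
  · exact IsSymm.add (transpose_vecMulVec y y) (isSymm_one.smul ε)
  · rwa [shor_slack_product_eq]
  · rcases eq_or_ne i j with rfl | hij
    · simpa [vecMulVec_apply] using add_pos (mul_pos (hy i) (hy i)) hε
    · simpa [vecMulVec_apply, hij] using mul_pos (hy i) (hy j)
  · rwa [shor_slack_var_product_eq, sub_eq_add_neg, ← smul_neg]

/-- Slater's condition holds for the Shor relaxation: if the polyhedron
`{y : Fᵀy ≤ w, y ≥ 0}` has an interior point, then the Shor relaxation admits a strictly
feasible solution. -/
theorem shor_relaxation_strictly_feasible {k m : ℕ} (hk : 1 ≤ k) (hm : 1 ≤ m)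
    (F : Matrix (Fin k) (Fin m) ℝ) (w : Fin m → ℝ)
    (h : ∃ y0 : Fin k → ℝ, (∀ i, Fᵀ.mulVec y0 i < w i) ∧ (∀ i, 0 < y0 i)) :
    ∃ (Y : Matrix (Fin k) (Fin k) ℝ) (y : Fin k → ℝ),
      Y.IsSymm ∧
      (∀ i, Fᵀ.mulVec y i < w i) ∧
      (∀ i, 0 < y i) ∧
      (∀ i j, 0 < (Fᵀ * Y * F - vecMulVec w (Fᵀ.mulVec y) - vecMulVec (Fᵀ.mulVec y) w
          + vecMulVec w w) i j) ∧
      (∀ i j, 0 < Y i j) ∧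
      (∀ i j, 0 < (vecMulVec w y - Fᵀ * Y) i j) ∧
      (fromBlocks Y (Matrix.of fun i (_ : Unit) => y i)
        (Matrix.of fun (_ : Unit) j => y j) 1).PosDef :=
  shor_relaxation_strictly_feasible_general F w h
end
end

section
/- Let k ≥ 1, let J be a finite index set, let Q̂ and W_j (j ∈ J) be real symmetric (k+1)×(k+1) matrices, and let W⁰ be the (k+1)×(k+1) matrix whose only nonzero entry is a 1 in position (k+1, k+1). Let ρ > 0. Suppose λ : J → ℝ with λ_j ≤ 0 for all j and ν ∈ ℝ satisfy Q̂ + Σ_{j∈J} λ_j W_j − ν W⁰ ⪯ 0 (i.e., the negative of this matrix is positive semidefinite). Suppose Ŷ is a symmetric positive semidefinite (k+1)×(k+1) matrix with Ŷ_{k+1,k+1} = 1 and ⟨W_j, Ŷ⟩ ≤ −2ρ² for all j ∈ J. Then 2ρ² Σ_{j∈J} λ_j ≥ ⟨Q̂, Ŷ⟩ − ν. (In the paper this is the content of the lemma bounding the sum of optimal dual multipliers of the Shor relaxation from below by (Φ_*(𝓕) − Φ̄(𝓕))/(2ρ_*²), instantiated with the constraint matrices W^{(i,j)} of the Shor dual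 and Ŷ = [[yyᵀ, y],[yᵀ, 1]] built from a Slater point y.) -/
/-! Pairing the positive semidefinite dual slack with `Ŷ` is weak duality:
`⟨Q̂, Ŷ⟩ + ∑ λⱼ ⟨Wⱼ, Ŷ⟩ ≤ ν`, the corner entry `Ŷₖ₊₁,ₖ₊₁ = 1` turning `⟨W⁰, Ŷ⟩` into `1`.
Since `λⱼ ≤ 0` and `⟨Wⱼ, Ŷ⟩ ≤ -2ρ²`, each term `λⱼ ⟨Wⱼ, Ŷ⟩` is at least `-2ρ² λⱼ`. -/

open Matrix

noncomputable section

section Frobenius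

variable {ι : Type} [Fintype ι]

lemma frob_add_left (A B C : Matrix ι ι ℝ) : frob (A + B) C = frob A C + frob B C := by
  simp [frob, add_mul]

lemma frob_sub_left (A B C : Matrix ι ι ℝ) : frob (A - B) C = frob A C - frob B C := by
  simp [frob, sub_mul]

lemma frob_neg_left (A B : Matrix ι ι ℝ) : frob (-A) B = -frob A B := by
  simp [frob]

lemma frob_smul_left (c : ℝ) (A B : Matrix ι ι ℝ) : frob (c • A) B = c * frob A B := by
  simp [frob]

lemma frob_sum_left {J : Type} [Fintype J] (A : J → Matrix ι ι ℝ) (B : Matrix ι ι ℝ) :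
    frob (∑ j, A j) B = ∑ j, frob (A j) B := by
  simp [frob, transpose_sum, Finset.sum_mul, trace_sum]

lemma frob_single_self_left [DecidableEq ι] (i : ι) (B : Matrix ι ι ℝ) :
    frob (single i i 1) B = B i i := by
  simp [frob, trace, mul_apply, single, ite_and]

lemma Matrix.PosSemidef.frob_nonneg {A B : Matrix ι ι ℝ} (hA : A.PosSemidef) (hB : B.PosSemidef) :
    0 ≤ frob A B := by
  classical
  open scoped MatrixOrder in
  obtain ⟨C, rfl⟩ := CStarAlgebra.nonneg_iff_eq_star_mul_self.mp hA.nonneg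
  have hsymm : (star C * C)ᵀ = star C * C := by
    simp [star_eq_conjTranspose, conjTranspose_eq_transpose_of_trivial, transpose_mul]
  rw [frob, hsymm, star_eq_conjTranspose, ← trace_mul_cycle]
  exact (hB.mul_mul_conjTranspose_same C).trace_nonneg

end Frobenius

lemma frob_add_sum_le_of_dual_feasible {ι J : Type} [Fintype ι] [DecidableEq ι] [Fintype J]
    {Q Y : Matrix ι ι ℝ} {W : J → Matrix ι ι ℝ} {lam : J → ℝ} {ν : ℝ} {i : ι}
    (hdual : (-(Q + ∑ j, lam j • W j - ν • single i i 1)).PosSemidef)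
    (hY : Y.PosSemidef) (hYii : Y i i = 1) :
    frob Q Y + ∑ j, lam j * frob (W j) Y ≤ ν := by
  have h := hdual.frob_nonneg hY
  simp only [frob_neg_left, frob_sub_left, frob_add_left, frob_sum_left, frob_smul_left,
    frob_single_self_left, hYii] at h
  linarith

theorem dual_multiplier_sum_lower_bound_general (k : ℕ)
    (J : Type) [Fintype J]
    (Qh : Matrix (Fin (k + 1)) (Fin (k + 1)) ℝ)
    (W : J → Matrix (Fin (k + 1)) (Fin (k + 1)) ℝ)
    (ρ : ℝ)
    (lam : J → ℝ) (hlam : ∀ j, lam j ≤ 0) (ν : ℝ)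
    (hdual : (-(Qh + ∑ j, lam j • W j
        - ν • Matrix.single (Fin.last k) (Fin.last k) (1 : ℝ))).PosSemidef)
    (Yh : Matrix (Fin (k + 1)) (Fin (k + 1)) ℝ) (hYpsd : Yh.PosSemidef)
    (hYcorner : Yh (Fin.last k) (Fin.last k) = 1)
    (hWY : ∀ j, frob (W j) Yh ≤ -(2 * ρ ^ 2)) :
    2 * ρ ^ 2 * ∑ j, lam j ≥ frob Qh Yh - ν := by
  have hweak := frob_add_sum_le_of_dual_feasible hdual hYpsd hYcorner
  have hterm : ∑ j, lam j * -(2 * ρ ^ 2) ≤ ∑ j, lam j * frob (W j) Yh :=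
    Finset.sum_le_sum fun j _ => mul_le_mul_of_nonpos_left (hWY j) (hlam j)
  rw [← Finset.sum_mul] at hterm
  linarith

/-- lower bound on the sum of dual multipliers from a dual feasible solution
and a primal point whose constraint values are at most `−2ρ²`. -/
theorem dual_multiplier_sum_lower_bound (k : ℕ) (hk : 1 ≤ k)
    (J : Type) [Fintype J]
    (Qh : Matrix (Fin (k + 1)) (Fin (k + 1)) ℝ) (hQh : Qh.IsSymm)
    (W : J → Matrix (Fin (k + 1)) (Fin (k + 1)) ℝ) (hW : ∀ j, (W j).IsSymm)
    (ρ : ℝ) (hρ : 0 < ρ)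
    (lam : J → ℝ) (hlam : ∀ j, lam j ≤ 0) (ν : ℝ)
    (hdual : (-(Qh + ∑ j, lam j • W j
        - ν • Matrix.single (Fin.last k) (Fin.last k) (1 : ℝ))).PosSemidef)
    (Yh : Matrix (Fin (k + 1)) (Fin (k + 1)) ℝ) (hYpsd : Yh.PosSemidef)
    (hYcorner : Yh (Fin.last k) (Fin.last k) = 1)
    (hWY : ∀ j, frob (W j) Yh ≤ -(2 * ρ ^ 2)) :
    2 * ρ ^ 2 * ∑ j, lam j ≥ frob Qh Yh - ν :=
  dual_multiplier_sum_lower_bound_general k J Qh W ρ lam hlam ν hdual Yh hYpsd hYcorner hWY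
end
end

section
/- Let k, m ≥ 1, F ∈ ℝ^{k×m}, w ∈ ℝ^m, t ∈ ℝ. Suppose there exists a ∈ ℝ^m with a ≥ 0 componentwise, Fa ≥ 𝟙 componentwise (𝟙 the all-ones vector in ℝ^k), and aᵀw = t. Let Y ∈ ℝ^{k×k} be symmetric with all entries nonnegative and y ∈ ℝ^k satisfy: y ≥ 0 componentwise, Fᵀy ≤ w componentwise, and every entry of w yᵀ − Fᵀ Y nonnegative. Then trace(Y) ≤ t², and consequently the trace of the block matrix [[Y, y],[yᵀ, 1]] is at most 1 + t². (This is the lemma stating that every feasible solution of the Shor relaxation has trace at most 1 + t_*², where t_* = max{𝟙ᵀy : Fᵀy ≤ w, y ≥ 0} and a is an optimal dual solution of this LP.) -/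
open Matrix

noncomputable section

/-- every feasible solution of the Shor relaxation has trace at most `1 + t²`,
where `t = aᵀw` for a dual optimal `a ≥ 0` with `Fa ≥ 𝟙`. -/
theorem shor_feasible_trace_bound (k m : ℕ) (hk : 1 ≤ k) (hm : 1 ≤ m)
    (F : Matrix (Fin k) (Fin m) ℝ) (w : Fin m → ℝ) (t : ℝ)
    (ha : ∃ a : Fin m → ℝ, (∀ i, 0 ≤ a i) ∧ (∀ i, 1 ≤ F.mulVec a i) ∧ a ⬝ᵥ w = t)
    (Y : Matrix (Fin k) (Fin k) ℝ) (hYs : Y.IsSymm) (hYnn : ∀ i j, 0 ≤ Y i j)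
    (y : Fin k → ℝ) (hy : ∀ i, 0 ≤ y i)
    (hFy : ∀ i, Fᵀ.mulVec y i ≤ w i)
    (hwy : ∀ i j, 0 ≤ (vecMulVec w y - Fᵀ * Y) i j) :
    Y.trace ≤ t ^ 2 ∧
    (fromBlocks Y (Matrix.of fun i (_ : Unit) => y i)
      (Matrix.of fun (_ : Unit) j => y j) 1).trace ≤ 1 + t ^ 2 := by
  obtain ⟨a, ha0, haF, hat⟩ := ha
  set b := F.mulVec a with hbdef
  have hb1 : ∀ i, 1 ≤ b i := haF
  have hb0 : ∀ i, 0 ≤ b i := fun i => le_trans zero_le_one (hb1 i)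
  -- y ⬝ᵥ b ≤ t
  have hybt : y ⬝ᵥ b ≤ t := by
    have h1 : y ⬝ᵥ b = Fᵀ.mulVec y ⬝ᵥ a := by
      rw [hbdef, dotProduct_mulVec, mulVec_transpose]
    rw [h1, ← hat, dotProduct_comm a w]
    exact Finset.sum_le_sum fun i _ =>
      mul_le_mul_of_nonneg_right (hFy i) (ha0 i)
  have hybnn : 0 ≤ y ⬝ᵥ b :=
    Finset.sum_nonneg fun i _ => mul_nonneg (hy i) (hb0 i)
  have ht0 : 0 ≤ t := le_trans hybnn hybt
  -- trace Y ≤ b ⬝ᵥ Y.mulVec b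
  have step1 : Y.trace ≤ b ⬝ᵥ Y.mulVec b := by
    have : b ⬝ᵥ Y.mulVec b = ∑ i, ∑ j, b i * (Y i j * b j) := by
      simp [dotProduct, mulVec, Finset.mul_sum]
    rw [this, Matrix.trace]
    refine Finset.sum_le_sum fun i _ => ?_
    calc Y.diag i ≤ b i * (Y i i * b i) := by
          rw [Matrix.diag_apply]
          have h0 := hYnn i i
          have h2 : 0 ≤ Y i i * b i := mul_nonneg h0 (hb0 i)
          calc Y i i = Y i i * 1 := (mul_one _).symm
            _ ≤ Y i i * b i := mul_le_mul_of_nonneg_left (hb1 i) h0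
            _ = 1 * (Y i i * b i) := (one_mul _).symm
            _ ≤ b i * (Y i i * b i) := mul_le_mul_of_nonneg_right (hb1 i) h2
      _ ≤ ∑ j, b i * (Y i j * b j) :=
          Finset.single_le_sum (f := fun j => b i * (Y i j * b j))
            (fun j _ => mul_nonneg (hb0 i) (mul_nonneg (hYnn i j) (hb0 j)))
            (Finset.mem_univ i)
  -- b ⬝ᵥ Y.mulVec b = a ⬝ᵥ (Fᵀ * Y).mulVec b
  have step2 : b ⬝ᵥ Y.mulVec b = a ⬝ᵥ (Fᵀ * Y).mulVec b := by
    conv_rhs => rw [dotProduct_mulVec, ← vecMul_vecMul, vecMul_transpose]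
    rw [← hbdef, ← dotProduct_mulVec]
  -- a ⬝ᵥ (Fᵀ * Y).mulVec b ≤ a ⬝ᵥ (vecMulVec w y).mulVec b
  have step3 : a ⬝ᵥ (Fᵀ * Y).mulVec b ≤ a ⬝ᵥ (vecMulVec w y).mulVec b := by
    refine Finset.sum_le_sum fun i _ => ?_
    refine mul_le_mul_of_nonneg_left ?_ (ha0 i)
    show (Fᵀ * Y) i ⬝ᵥ b ≤ vecMulVec w y i ⬝ᵥ b
    refine Finset.sum_le_sum fun j _ => ?_
    refine mul_le_mul_of_nonneg_right ?_ (hb0 j)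
    have := hwy i j
    simp only [Matrix.sub_apply, sub_nonneg] at this
    exact this
  -- a ⬝ᵥ (vecMulVec w y).mulVec b = t * (y ⬝ᵥ b)
  have step4 : a ⬝ᵥ (vecMulVec w y).mulVec b = t * (y ⬝ᵥ b) := by
    rw [← hat]
    have hmv : (vecMulVec w y) *ᵥ b = (y ⬝ᵥ b) • w := by
      funext i
      simp only [mulVec, dotProduct, vecMulVec_apply, Pi.smul_apply, smul_eq_mul,
        Finset.sum_mul]
      exact Finset.sum_congr rfl fun j _ => by ring
    rw [hmv, dotProduct_smul, smul_eq_mul]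
    ring
  have htr : Y.trace ≤ t ^ 2 := by
    have h5 : t * (y ⬝ᵥ b) ≤ t * t := mul_le_mul_of_nonneg_left hybt ht0
    calc Y.trace ≤ b ⬝ᵥ Y.mulVec b := step1
      _ = a ⬝ᵥ (Fᵀ * Y).mulVec b := step2
      _ ≤ a ⬝ᵥ (vecMulVec w y).mulVec b := step3
      _ = t * (y ⬝ᵥ b) := step4
      _ ≤ t * t := h5
      _ = t ^ 2 := (sq t).symm
  refine ⟨htr, ?_⟩
  have heq : (fromBlocks Y (Matrix.of fun i (_ : Unit) => y i)
      (Matrix.of fun (_ : Unit) j => y j) 1).trace = Y.trace + 1 := by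
    simp [Matrix.trace, Matrix.diag, fromBlocks, Fintype.sum_sum_type]
  rw [heq]
  linarith
end
end

section
/- Let k, m ≥ 1, let Q̃ ∈ ℝ^{k×k} be symmetric, F ∈ ℝ^{k×m} with columns F₁,…,F_m, Λ ∈ ℝ^{k×m} with columns Λ₁,…,Λ_m, w ∈ ℝ^m, and λ ∈ ℝ^m with λ_i > 0 for all i. Suppose −Q̃ + Σ_{i=1}^m (Λ_i F_iᵀ + F_i Λ_iᵀ) − Σ_{i=1}^m λ_i^{−1} Λ_i Λ_iᵀ is positive semidefinite. Then the symmetric (k+m+1)×(k+m+1) block matrix S := [[−Q̃ + F diag(λ) Fᵀ, F diag(λ) − Λ, Λw − F diag(λ) w], [(F diag(λ) − Λ)ᵀ, diag(λ), −diag(λ) w], [(Λw − F diag(λ) w)ᵀ, −(diag(λ) w)ᵀ, wᵀ diag(λ) w]] is positive semidefinite. -/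
/-!
Write `D = diag(λ)` and let `T` be the upper left `(k + m) × (k + m)` block of `S`. Since `D` is
positive definite, `T` is positive semidefinite iff its Schur complement
`-Q̃ + F D Fᵀ - (F D - Λ) D⁻¹ (F D - Λ)ᵀ = -Q̃ + Λ Fᵀ + F Λᵀ - Λ D⁻¹ Λᵀ` is, which is the hypothesis.
With `z = (0, -w)`, the last column of `S` is `T z` and its corner entry is `zᵀ T z`, so
`S = Kᵀ T K` for `K = [I | z]`.
-/

open Matrix

namespace Matrix

section Bordering

variable {n R : Type*} [Fintype n] [DecidableEq n] [Ring R] [PartialOrder R] [StarRing R]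

theorem PosSemidef.fromBlocks_mulVec {T : Matrix n n R} (hT : T.PosSemidef) (z : n → R) :
    (fromBlocks T (replicateCol Unit (T *ᵥ z)) (replicateRow Unit (star (T *ᵥ z)))
      (of fun _ _ => star z ⬝ᵥ T *ᵥ z)).PosSemidef := by
  convert hT.conjTranspose_mul_mul_same (fromCols (1 : Matrix n n R) (replicateCol Unit z))
    using 1
  rw [conjTranspose_fromCols_eq_fromRows_conjTranspose, conjTranspose_replicateCol,
    conjTranspose_one, Matrix.mul_assoc, mul_fromCols, fromRows_mul_fromCols, Matrix.one_mul,
    Matrix.one_mul, Matrix.mul_one, ← replicateCol_mulVec, replicateRow_mul_replicateCol,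
    ← replicateRow_vecMul, star_mulVec, hT.1.eq]

end Bordering

variable {l m n α : Type*} [Fintype n] [CommRing α]

theorem mul_transpose_eq_sum_vecMulVec (A : Matrix l n α) (B : Matrix m n α) :
    A * Bᵀ = ∑ i, vecMulVec (fun a => A a i) (fun b => B b i) := by
  ext a b
  simp [mul_apply, sum_apply, vecMulVec_apply]

theorem mul_diagonal_mul_transpose_eq_sum_smul_vecMulVec [DecidableEq n] (A : Matrix l n α)
    (d : n → α) (B : Matrix m n α) :
    A * diagonal d * Bᵀ = ∑ i, d i • vecMulVec (fun a => A a i) (fun b => B b i) := by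
  ext a b
  rw [mul_apply, sum_apply]
  simp only [mul_diagonal, transpose_apply, smul_apply, vecMulVec_apply, smul_eq_mul]
  exact Finset.sum_congr rfl fun i _ => by ring

theorem schur_complement_mul_sub_eq [DecidableEq n] (A : Matrix l l α) (F Λ : Matrix l n α)
    (D : Matrix n n α) [Invertible D] (hD : Dᵀ = D) :
    A + F * D * Fᵀ - (F * D - Λ) * D⁻¹ * (F * D - Λ)ᵀ
      = A + (Λ * Fᵀ + F * Λᵀ) - Λ * D⁻¹ * Λᵀ := by
  simp only [transpose_sub, transpose_mul, hD, Matrix.sub_mul, Matrix.mul_sub, Matrix.mul_assoc,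
    Matrix.mul_inv_of_invertible, Matrix.one_mul, Matrix.inv_mul_cancel_left_of_invertible]
  abel

end Matrix

theorem auxiliary_S_posSemidef_general {k m : ℕ}
    (Qt : Matrix (Fin k) (Fin k) ℝ)
    (F : Matrix (Fin k) (Fin m) ℝ) (Λ : Matrix (Fin k) (Fin m) ℝ)
    (w : Fin m → ℝ) (lam : Fin m → ℝ) (hlam : ∀ i, 0 < lam i)
    (hpsd : (-Qt
        + ∑ i, (vecMulVec (fun a => Λ a i) (fun a => F a i)
            + vecMulVec (fun a => F a i) (fun a => Λ a i))
        - ∑ i, (lam i)⁻¹ • vecMulVec (fun a => Λ a i) (fun a => Λ a i)).PosSemidef) :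
    (fromBlocks
      (fromBlocks
        (-Qt + F * Matrix.diagonal lam * Fᵀ)
        (F * Matrix.diagonal lam - Λ)
        (F * Matrix.diagonal lam - Λ)ᵀ
        (Matrix.diagonal lam))
      (Matrix.of fun i (_ : Unit) =>
        Sum.elim (fun a => Λ.mulVec w a - (F * Matrix.diagonal lam).mulVec w a)
          (fun b => -((Matrix.diagonal lam).mulVec w b)) i)
      (Matrix.of fun (_ : Unit) j =>
        Sum.elim (fun a => Λ.mulVec w a - (F * Matrix.diagonal lam).mulVec w a)
          (fun b => -((Matrix.diagonal lam).mulVec w b)) j)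
      (Matrix.of fun _ _ => w ⬝ᵥ (Matrix.diagonal lam).mulVec w)).PosSemidef := by
  have hD : (diagonal lam).PosDef := posDef_diagonal_iff.mpr hlam
  have := hD.isUnit.invertible
  have hinv : (diagonal lam)⁻¹ = diagonal fun i => (lam i)⁻¹ :=
    inv_eq_left_inv <| by
      rw [diagonal_mul_diagonal, ← diagonal_one]
      exact congrArg diagonal (funext fun i => inv_mul_cancel₀ (hlam i).ne')
  have hschur : (-Qt + F * diagonal lam * Fᵀ
      - (F * diagonal lam - Λ) * (diagonal lam)⁻¹ * (F * diagonal lam - Λ)ᵀ).PosSemidef := by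
    rw [schur_complement_mul_sub_eq _ _ _ _ (diagonal_transpose lam), hinv,
      mul_transpose_eq_sum_vecMulVec, mul_transpose_eq_sum_vecMulVec,
      mul_diagonal_mul_transpose_eq_sum_smul_vecMulVec, ← Finset.sum_add_distrib]
    exact hpsd
  have hT := (PosDef.fromBlocks₂₂ _ _ hD).mpr hschur
  rw [conjTranspose_eq_transpose_of_trivial] at hT
  have hTz : fromBlocks (-Qt + F * diagonal lam * Fᵀ) (F * diagonal lam - Λ)
        (F * diagonal lam - Λ)ᵀ (diagonal lam) *ᵥ Sum.elim 0 (-w)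
      = Sum.elim (Λ *ᵥ w - (F * diagonal lam) *ᵥ w) (-(diagonal lam *ᵥ w)) := by
    simp [fromBlocks_mulVec, Matrix.sub_mulVec, mulVec_neg]
  have hS := hT.fromBlocks_mulVec (Sum.elim 0 (-w))
  simp only [hTz, star_trivial, sumElim_dotProduct_sumElim, zero_dotProduct, zero_add,
    neg_dotProduct_neg] at hS
  exact hS

/-- positive semidefiniteness of the auxiliary matrix `S`. -/
theorem auxiliary_S_posSemidef {k m : ℕ} (hk : 1 ≤ k) (hm : 1 ≤ m)
    (Qt : Matrix (Fin k) (Fin k) ℝ) (hQt : Qt.IsSymm)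
    (F : Matrix (Fin k) (Fin m) ℝ) (Λ : Matrix (Fin k) (Fin m) ℝ)
    (w : Fin m → ℝ) (lam : Fin m → ℝ) (hlam : ∀ i, 0 < lam i)
    (hpsd : (-Qt
        + ∑ i, (vecMulVec (fun a => Λ a i) (fun a => F a i)
            + vecMulVec (fun a => F a i) (fun a => Λ a i))
        - ∑ i, (lam i)⁻¹ • vecMulVec (fun a => Λ a i) (fun a => Λ a i)).PosSemidef) :
    (fromBlocks
      (fromBlocks
        (-Qt + F * Matrix.diagonal lam * Fᵀ)
        (F * Matrix.diagonal lam - Λ)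
        (F * Matrix.diagonal lam - Λ)ᵀ
        (Matrix.diagonal lam))
      (Matrix.of fun i (_ : Unit) =>
        Sum.elim (fun a => Λ.mulVec w a - (F * Matrix.diagonal lam).mulVec w a)
          (fun b => -((Matrix.diagonal lam).mulVec w b)) i)
      (Matrix.of fun (_ : Unit) j =>
        Sum.elim (fun a => Λ.mulVec w a - (F * Matrix.diagonal lam).mulVec w a)
          (fun b => -((Matrix.diagonal lam).mulVec w b)) j)
      (Matrix.of fun _ _ => w ⬝ᵥ (Matrix.diagonal lam).mulVec w)).PosSemidef :=
  auxiliary_S_posSemidef_general Qt F Λ w lam hlam hpsd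
end

section
/- Let k, m ≥ 1, Q ∈ ℝ^{k×k} symmetric with columns Q₁,…,Q_k, d ∈ ℝ^k, F ∈ ℝ^{k×m}, w ∈ ℝ^m, and τ, θ ∈ ℝ^k with θ_i > 0 for all i. Suppose the set R_τ := {y ∈ ℝ^k : Fᵀy ≤ w, τᵀy ≥ 1, y ≥ 0} is nonempty, and let β ∈ ℝ be such that for every index i ∈ {1,…,k} and every y ∈ R_τ, (θ_i^{−1} Q_i + d)ᵀ y + θ_i^{−1} d_i ≤ β. Then there exist Λ₀ ∈ ℝ^k with Λ₀ ≥ 0 and Λ ∈ ℝ^{k×m} with all entries nonnegative such that, entrywise, Q ≤ −Λ₀τᵀ − τΛ₀ᵀ + ΛFᵀ + FΛᵀ − (1/2)(dθᵀ + θdᵀ), and, componentwise, d ≤ βθ + 2Λ₀ − 2Λw. (This is the lemma relating Konno's bound φ̄ᴷ_{τ,θ} to the LP relaxation: it shows the minimum of the LP in (prob:konnoQP) is at most φ̄ᴷ_{τ,θ}.) -/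
/-!
For a fixed column `i`, the hypothesis bounds the linear program
`max {(θᵢ⁻¹ Qᵢ + d)ᵀ y : y ∈ R_τ}` by `β - θᵢ⁻¹ dᵢ`. LP duality, i.e. Farkas' lemma (whose proof
rests on the closedness of finitely generated cones, a consequence of the conic Carathéodory
theorem), turns this bound into nonnegative dual multipliers `(λᵢ, λ₀ᵢ)`. Scaled by `θᵢ / 2` they
become the `i`-th rows of `Λ` and `Λ₀` and bound the `i`-th column of `Q`; averaging this bound with
the one for the `i`-th row, which is the same by the symmetry of `Q`, gives the matrix inequality.
-/

open Matrix Finset Filter Topology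

section ConicCaratheodory

variable {ι E : Type*} [Fintype ι] [AddCommGroup E] [Module ℝ E]

theorem exists_nonneg_sub_smul_apply_eq_zero {μ c : ι → ℝ} (hμ : 0 ≤ μ) {j : ι} (hj : 0 < c j) :
    ∃ (r : ℝ) (i₀ : ι), 0 < c i₀ ∧ 0 ≤ μ - r • c ∧ (μ - r • c) i₀ = 0 := by
  classical
  obtain ⟨i₀, hi₀, hmin⟩ := (univ.filter (0 < c ·)).exists_min_image (fun i => μ i / c i)
    ⟨j, by simpa using hj⟩
  have hci₀ : 0 < c i₀ := (mem_filter.mp hi₀).2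
  refine ⟨μ i₀ / c i₀, i₀, hci₀, fun i => ?_, by simp [div_mul_cancel₀ _ hci₀.ne']⟩
  show 0 ≤ μ i - μ i₀ / c i₀ * c i
  rcases lt_or_ge 0 (c i) with hci | hci
  · have := hmin i (by simpa using hci)
    rw [le_div_iff₀ hci] at this
    linarith
  · have hμi₀ : 0 ≤ μ i₀ := hμ i₀
    have hμi : 0 ≤ μ i := hμ i
    nlinarith [mul_nonpos_of_nonneg_of_nonpos (div_nonneg hμi₀ hci₀.le) hci]

theorem exists_linearIndepOn_nonneg_sum_smul_eq (g : ι → E) {μ : ι → ℝ} (hμ : 0 ≤ μ) :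
    ∃ s : Finset ι, LinearIndepOn ℝ g (s : Set ι) ∧
      ∃ ν : ι → ℝ, 0 ≤ ν ∧ (∀ i ∉ s, ν i = 0) ∧ ∑ i, ν i • g i = ∑ i, μ i • g i := by
  classical
  suffices ∀ (t : Finset ι) (μ : ι → ℝ), 0 ≤ μ → (∀ i ∉ t, μ i = 0) →
      ∃ s : Finset ι, LinearIndepOn ℝ g (s : Set ι) ∧
        ∃ ν : ι → ℝ, 0 ≤ ν ∧ (∀ i ∉ s, ν i = 0) ∧ ∑ i, ν i • g i = ∑ i, μ i • g i from
    this univ μ hμ (by simp)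
  intro t
  induction t using Finset.strongInduction with
  | H t ih =>
  intro μ hμ hμt
  by_cases hli : LinearIndepOn ℝ g (t : Set ι)
  · exact ⟨t, hli, μ, hμ, hμt, rfl⟩
  obtain ⟨c, hct, hc0, j, hj⟩ : ∃ c : ι → ℝ, (∀ i ∉ t, c i = 0) ∧ ∑ i, c i • g i = 0 ∧
      ∃ j, 0 < c j := by
    simp only [linearIndepOn_iff'', not_forall] at hli
    obtain ⟨t', c, ht't, hct', hsum, j, hjt', hcj⟩ := hli
    have hct : ∀ i ∉ t, c i = 0 := fun i hi => hct' i fun h => hi (by exact_mod_cast ht't h)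
    have hsum' : ∑ i, c i • g i = 0 := by
      rwa [← Finset.sum_subset (subset_univ t') fun i _ hi => by simp [hct' i hi]]
    rcases (Ne.lt_or_gt hcj) with hneg | hpos
    · exact ⟨-c, fun i hi => by simp [hct i hi], by simp [hsum'], j, by simpa using hneg⟩
    · exact ⟨c, hct, hsum', j, hpos⟩
  obtain ⟨r, i₀, hci₀, hν, hνi₀⟩ := exists_nonneg_sub_smul_apply_eq_zero hμ hj
  have hi₀t : i₀ ∈ t := by_contra fun h => hci₀.ne' (hct i₀ h)
  obtain ⟨s, hs, ν, hν0, hνs, hνsum⟩ := ih (t.erase i₀) (erase_ssubset hi₀t) (μ - r • c) hν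
    fun i hi => by
      rcases eq_or_ne i i₀ with rfl | hne
      · exact hνi₀
      · have hit : i ∉ t := fun h => hi (mem_erase.mpr ⟨hne, h⟩)
        simp [hμt i hit, hct i hit]
  refine ⟨s, hs, ν, hν0, hνs, ?_⟩
  simp only [hνsum, Pi.sub_apply, Pi.smul_apply, smul_eq_mul, sub_smul, mul_smul, sum_sub_distrib,
    ← smul_sum, hc0, smul_zero, sub_zero]

end ConicCaratheodory

section FinitelyGeneratedCone

variable {ι E : Type*} [Fintype ι] [AddCommGroup E] [Module ℝ E] [TopologicalSpace E]
  [IsTopologicalAddGroup E] [ContinuousSMul ℝ E] [T2Space E]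

theorem isClosed_image_linearCombination_of_linearIndepOn (g : ι → E) {s : Finset ι}
    (hs : LinearIndepOn ℝ g (s : Set ι)) :
    IsClosed (Fintype.linearCombination ℝ g '' {ν | 0 ≤ ν ∧ ∀ i ∉ s, ν i = 0}) := by
  set V : Submodule ℝ (ι → ℝ) := Submodule.pi (↑s)ᶜ fun _ => ⊥
  have hinj : LinearMap.ker ((Fintype.linearCombination ℝ g).domRestrict V) = ⊥ := by
    refine LinearMap.ker_eq_bot'.mpr fun ν hν => Subtype.ext <| funext fun i => ?_
    have hνs : ∀ i ∉ s, (ν : ι → ℝ) i = 0 := fun i hi => by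
      simpa using Submodule.mem_pi.mp ν.2 i hi
    by_cases hi : i ∈ s
    · refine linearIndepOn_iff''.mp hs s ν subset_rfl hνs ?_ i hi
      rw [Finset.sum_subset (subset_univ s) fun i _ hi => by simp [hνs i hi]]
      simpa [Fintype.linearCombination_apply] using hν
    · exact hνs i hi
  have himage : Fintype.linearCombination ℝ g '' {ν | 0 ≤ ν ∧ ∀ i ∉ s, ν i = 0} =
      (Fintype.linearCombination ℝ g).domRestrict V '' (Subtype.val ⁻¹' Set.Ici 0) := by
    rw [show ⇑((Fintype.linearCombination ℝ g).domRestrict V) =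
      Fintype.linearCombination ℝ g ∘ Subtype.val from rfl, Set.image_comp]
    congr 1
    ext ν
    simp [V, Submodule.mem_pi, and_comm]
  rw [himage]
  exact (LinearMap.isClosedEmbedding_of_injective hinj).isClosedMap _
    (isClosed_Ici.preimage continuous_subtype_val)

theorem isClosed_image_linearCombination_Ici (g : ι → E) :
    IsClosed (Fintype.linearCombination ℝ g '' Set.Ici 0) := by
  have hunion : Fintype.linearCombination ℝ g '' Set.Ici 0 =
      ⋃ (s : Finset ι) (_ : LinearIndepOn ℝ g (s : Set ι)),
        Fintype.linearCombination ℝ g '' {ν | 0 ≤ ν ∧ ∀ i ∉ s, ν i = 0} := by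
    ext x
    simp only [Set.mem_image, Set.mem_Ici, Set.mem_iUnion, Set.mem_ofPred_eq,
      Fintype.linearCombination_apply]
    constructor
    · rintro ⟨μ, hμ, rfl⟩
      obtain ⟨s, hs, ν, hν, hνs, hsum⟩ := exists_linearIndepOn_nonneg_sum_smul_eq g hμ
      exact ⟨s, hs, ν, ⟨hν, hνs⟩, hsum⟩
    · rintro ⟨s, -, ν, ⟨hν, -⟩, rfl⟩
      exact ⟨ν, hν, rfl⟩
  rw [hunion]
  exact isClosed_iUnion_of_finite fun s => isClosed_iUnion_of_finite fun hs =>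
    isClosed_image_linearCombination_of_linearIndepOn g hs

theorem exists_nonneg_sum_smul_eq_of_forall_dual [LocallyConvexSpace ℝ E] (g : ι → E) (b : E)
    (h : ∀ f : StrongDual ℝ E, (∀ i, 0 ≤ f (g i)) → 0 ≤ f b) :
    ∃ μ : ι → ℝ, 0 ≤ μ ∧ ∑ i, μ i • g i = b := by
  classical
  let C : ProperCone ℝ E :=
    ⟨(PointedCone.positive ℝ (ι → ℝ)).map (Fintype.linearCombination ℝ g),
      isClosed_image_linearCombination_Ici g⟩
  by_contra hb
  obtain ⟨f, hfC, hfb⟩ := C.hyperplane_separation_point (x₀ := b) fun ⟨μ, hμ, hμb⟩ =>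
    hb ⟨μ, hμ, by simpa [Fintype.linearCombination_apply] using hμb⟩
  refine hfb.not_ge (h f fun i => hfC _ ⟨Pi.single i 1, ?_, ?_⟩)
  · simp [Pi.single_nonneg]
  · simp [Fintype.linearCombination_apply]

end FinitelyGeneratedCone

theorem StrongDual.apply_eq_dotProduct {m : Type*} [Fintype m] [DecidableEq m]
    (f : StrongDual ℝ (m → ℝ)) (v : m → ℝ) :
    f v = v ⬝ᵥ fun i => f (Pi.single i 1) := by
  conv_lhs => rw [← Finset.univ_sum_single v]
  rw [map_sum, dotProduct]
  refine Finset.sum_congr rfl fun i _ => ?_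
  rw [← smul_eq_mul, ← map_smul, ← Pi.single_smul, smul_eq_mul, mul_one]

namespace Matrix

variable {m n : Type*} [Fintype n]

theorem mulVec_eq_sum_smul_col (A : Matrix m n ℝ) (x : n → ℝ) : A *ᵥ x = ∑ j, x j • Aᵀ j := by
  ext i; simp [mulVec, dotProduct, mul_comm]

theorem exists_nonneg_mulVec_le_of_forall [Fintype m] (A : Matrix m n ℝ) (b : m → ℝ)
    (h : ∀ y, 0 ≤ y → 0 ≤ y ᵥ* A → 0 ≤ y ⬝ᵥ b) : ∃ x, 0 ≤ x ∧ A *ᵥ x ≤ b := by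
  classical
  obtain ⟨μ, hμ, hμb⟩ := exists_nonneg_sum_smul_eq_of_forall_dual
    (Sum.elim (fun j => Aᵀ j) (fun i => Pi.single i 1)) b fun f hf => by
      set y : m → ℝ := fun i => f (Pi.single i 1)
      have hfy : ∀ v, f v = y ⬝ᵥ v := fun v => by
        rw [StrongDual.apply_eq_dotProduct, dotProduct_comm]
      rw [hfy]
      refine h y (fun i => hf (.inr i)) fun j => ?_
      simpa [hfy, vecMul, dotProduct, mul_comm] using hf (.inl j)
  refine ⟨μ ∘ Sum.inl, fun j => hμ _, ?_⟩
  rw [← hμb, Fintype.sum_sum_type, mulVec_eq_sum_smul_col]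
  exact le_add_of_nonneg_right <| sum_nonneg fun i _ =>
    smul_nonneg (hμ _) (Pi.single_nonneg.mpr zero_le_one)

end Matrix

section FeasibleRegion

variable {n m : Type*} [Fintype n]

/-- The set `R_τ` of the paper. -/
def feasibleRegion (F : Matrix n m ℝ) (w : m → ℝ) (τ : n → ℝ) : Set (n → ℝ) :=
  {y | Fᵀ *ᵥ y ≤ w ∧ 1 ≤ τ ⬝ᵥ y ∧ 0 ≤ y}

variable {F : Matrix n m ℝ} {w : m → ℝ} {τ c : n → ℝ} {γ : ℝ}

theorem dotProduct_le_mul_of_pos (hb : ∀ y ∈ feasibleRegion F w τ, c ⬝ᵥ y ≤ γ) {v : n → ℝ}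
    {s : ℝ} (hs : 0 < s) (hv : 0 ≤ v) (hFv : Fᵀ *ᵥ v ≤ s • w) (hτv : s ≤ τ ⬝ᵥ v) :
    c ⬝ᵥ v ≤ γ * s := by
  have hmem : s⁻¹ • v ∈ feasibleRegion F w τ := by
    refine ⟨?_, ?_, smul_nonneg (inv_nonneg.mpr hs.le) hv⟩
    · rwa [mulVec_smul, inv_smul_le_iff_of_pos hs]
    · rwa [dotProduct_smul, smul_eq_mul, le_inv_mul_iff₀ hs, mul_one]
  have := hb _ hmem
  rwa [dotProduct_smul, smul_eq_mul, inv_mul_le_iff₀ hs, mul_comm] at this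

theorem dotProduct_le_mul_of_nonneg (hne : (feasibleRegion F w τ).Nonempty)
    (hb : ∀ y ∈ feasibleRegion F w τ, c ⬝ᵥ y ≤ γ) {u : n → ℝ} {t : ℝ} (ht : 0 ≤ t)
    (hu : 0 ≤ u) (hFu : Fᵀ *ᵥ u ≤ t • w) (hτu : t ≤ τ ⬝ᵥ u) : c ⬝ᵥ u ≤ γ * t := by
  obtain ⟨y₀, hFy₀, hτy₀, hy₀⟩ := hne
  -- `(u + ε • y₀) / (t + ε)` is feasible for every `ε > 0`; then let `ε → 0`.
  have hε : ∀ ε > 0, c ⬝ᵥ u + ε * (c ⬝ᵥ y₀ - γ) ≤ γ * t := fun ε hε => by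
    have := dotProduct_le_mul_of_pos hb (add_pos_of_nonneg_of_pos ht hε)
      (add_nonneg hu (smul_nonneg hε.le hy₀))
      (by rw [mulVec_add, mulVec_smul, add_smul]; gcongr)
      (by rw [dotProduct_add, dotProduct_smul, smul_eq_mul]; gcongr; nlinarith)
    rw [dotProduct_add, dotProduct_smul, smul_eq_mul] at this
    linarith
  have hlim : Tendsto (fun ε => c ⬝ᵥ u + ε * (c ⬝ᵥ y₀ - γ)) (𝓝[>] 0) (𝓝 (c ⬝ᵥ u)) := by
    refine tendsto_nhdsWithin_of_tendsto_nhds ?_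
    simpa using (Continuous.tendsto (f := fun ε : ℝ => c ⬝ᵥ u + ε * (c ⬝ᵥ y₀ - γ))
      (by fun_prop) 0)
  exact le_of_tendsto hlim (eventually_nhdsWithin_of_forall hε)

theorem exists_dual_multipliers_of_forall_dotProduct_le [Fintype m]
    (hne : (feasibleRegion F w τ).Nonempty) (hb : ∀ y ∈ feasibleRegion F w τ, c ⬝ᵥ y ≤ γ) :
    ∃ (l : m → ℝ) (l₀ : ℝ), 0 ≤ l ∧ 0 ≤ l₀ ∧ (∀ a, c a ≤ (F *ᵥ l) a - l₀ * τ a) ∧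
      w ⬝ᵥ l - l₀ ≤ γ := by
  -- The dual program in the variables `(l, l₀) ≥ 0`, written as `A *ᵥ (l, l₀) ≤ (-c, γ)`.
  let A := fromBlocks (-F) (replicateCol Unit τ) (replicateRow Unit w) (-1)
  have hA_mulVec : ∀ x, A *ᵥ x = Sum.elim (fun a => x (.inr ()) * τ a - (F *ᵥ (x ∘ Sum.inl)) a)
      fun _ => w ⬝ᵥ (x ∘ Sum.inl) - x (.inr ()) := fun x => by
    ext (a | _) <;> simp [A, mulVec, dotProduct, Fintype.sum_sum_type, mul_comm] <;> ring
  have hA_vecMul : ∀ y, y ᵥ* A = Sum.elim (fun j => y (.inr ()) * w j - (Fᵀ *ᵥ (y ∘ Sum.inl)) j)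
      fun _ => τ ⬝ᵥ (y ∘ Sum.inl) - y (.inr ()) := fun y => by
    ext (j | _) <;> simp [A, vecMul, mulVec, dotProduct, Fintype.sum_sum_type, mul_comm] <;> ring
  obtain ⟨x, hx, hAx⟩ := exists_nonneg_mulVec_le_of_forall A (Sum.elim (-c) fun _ => γ)
    fun y hy hyA => by
      rw [hA_vecMul] at hyA
      have hF : Fᵀ *ᵥ (y ∘ Sum.inl) ≤ y (.inr ()) • w := fun j =>
        sub_nonneg.mp (hyA (.inl j))
      have hτ : y (.inr ()) ≤ τ ⬝ᵥ (y ∘ Sum.inl) := sub_nonneg.mp (hyA (.inr ()))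
      have := dotProduct_le_mul_of_nonneg hne hb (u := y ∘ Sum.inl) (hy _) (fun a => hy _) hF hτ
      rw [← Sum.elim_comp_inl_inr y, sumElim_dotProduct_sumElim, dotProduct_neg,
        dotProduct_comm]
      have hγ : (y ∘ Sum.inr) ⬝ᵥ (fun _ => γ) = γ * y (.inr ()) := by
        simp [dotProduct, mul_comm]
      linarith
  rw [hA_mulVec] at hAx
  refine ⟨x ∘ Sum.inl, x (.inr ()), fun j => hx _, hx _, fun a => ?_, ?_⟩
  · have := hAx (.inl a)
    simp only [Sum.elim_inl, Pi.neg_apply] at this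
    linarith
  · simpa using hAx (.inr ())

theorem exists_scaled_dual_multipliers [Fintype m] {q d : n → ℝ} {θᵢ dᵢ β : ℝ} (hθ : 0 < θᵢ)
    (hne : (feasibleRegion F w τ).Nonempty)
    (hβ : ∀ y ∈ feasibleRegion F w τ, (fun a => θᵢ⁻¹ * q a + d a) ⬝ᵥ y + θᵢ⁻¹ * dᵢ ≤ β) :
    ∃ (l : m → ℝ) (l₀ : ℝ), 0 ≤ l ∧ 0 ≤ l₀ ∧
      (∀ a, q a ≤ 2 * (F *ᵥ l) a - 2 * l₀ * τ a - θᵢ * d a) ∧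
      dᵢ ≤ β * θᵢ + 2 * l₀ - 2 * (w ⬝ᵥ l) := by
  obtain ⟨l, l₀, hl, hl₀, hc, hγ⟩ := exists_dual_multipliers_of_forall_dotProduct_le hne
    (γ := β - θᵢ⁻¹ * dᵢ) fun y hy => le_sub_iff_add_le.mpr (hβ y hy)
  refine ⟨(θᵢ / 2) • l, θᵢ / 2 * l₀, smul_nonneg (by positivity) hl, by positivity,
    fun a => ?_, ?_⟩
  · have := mul_le_mul_of_nonneg_left (hc a) hθ.le
    rw [mul_add, mul_inv_cancel_left₀ hθ.ne'] at this
    rw [mulVec_smul, Pi.smul_apply, smul_eq_mul]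
    linarith
  · have := mul_le_mul_of_nonneg_left hγ hθ.le
    rw [mul_sub, mul_sub, mul_inv_cancel_left₀ hθ.ne'] at this
    rw [dotProduct_smul, smul_eq_mul]
    linarith

end FeasibleRegion

theorem konno_bound_lp_relaxation_general {k m : ℕ}
    (Q : Matrix (Fin k) (Fin k) ℝ) (hQ : Q.IsSymm) (d : Fin k → ℝ)
    (F : Matrix (Fin k) (Fin m) ℝ) (w : Fin m → ℝ)
    (τ θ : Fin k → ℝ) (hθ : ∀ i, 0 < θ i)
    (hne : ∃ y : Fin k → ℝ, (∀ i, Fᵀ.mulVec y i ≤ w i) ∧ 1 ≤ τ ⬝ᵥ y ∧ (∀ i, 0 ≤ y i))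
    (β : ℝ)
    (hβ : ∀ i : Fin k, ∀ y : Fin k → ℝ,
      (∀ j, Fᵀ.mulVec y j ≤ w j) → 1 ≤ τ ⬝ᵥ y → (∀ j, 0 ≤ y j) →
      (fun a => (θ i)⁻¹ * Q a i + d a) ⬝ᵥ y + (θ i)⁻¹ * d i ≤ β) :
    ∃ (Λ₀ : Fin k → ℝ) (Λ : Matrix (Fin k) (Fin m) ℝ),
      (∀ a, 0 ≤ Λ₀ a) ∧ (∀ a b, 0 ≤ Λ a b) ∧
      (∀ a b, Q a b ≤
        (-vecMulVec Λ₀ τ - vecMulVec τ Λ₀ + Λ * Fᵀ + F * Λᵀ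
          - (1 / 2 : ℝ) • (vecMulVec d θ + vecMulVec θ d)) a b) ∧
      (∀ a, d a ≤ β * θ a + 2 * Λ₀ a - 2 * Λ.mulVec w a) := by
  obtain ⟨y₀, hy₀⟩ := hne
  choose l l₀ hl hl₀ hcol hd using fun i => exists_scaled_dual_multipliers (hθ i) ⟨y₀, hy₀⟩
    fun y hy => hβ i y hy.1 hy.2.1 hy.2.2
  refine ⟨l₀, Matrix.of l, hl₀, hl, fun a b => ?_, fun a => ?_⟩
  · have hcol_b := hcol b a
    have hrow_a := hcol a b
    rw [hQ.apply] at hrow_a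
    have hΛF : (of l * Fᵀ) a b = (F *ᵥ l a) b := by simp [mul_apply, mulVec, dotProduct, mul_comm]
    have hFΛ : (F * (of l)ᵀ) a b = (F *ᵥ l b) a := by simp [mul_apply, mulVec, dotProduct]
    simp only [Matrix.sub_apply, Matrix.add_apply, Matrix.neg_apply, Matrix.smul_apply,
      vecMulVec_apply, hΛF, hFΛ, smul_eq_mul]
    linarith
  · simpa [mulVec, dotProduct_comm] using hd a

/-- Farkas-type lemma relating Konno's bound to the LP relaxation. -/
theorem konno_bound_lp_relaxation {k m : ℕ} (hk : 1 ≤ k) (hm : 1 ≤ m)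
    (Q : Matrix (Fin k) (Fin k) ℝ) (hQ : Q.IsSymm) (d : Fin k → ℝ)
    (F : Matrix (Fin k) (Fin m) ℝ) (w : Fin m → ℝ)
    (τ θ : Fin k → ℝ) (hθ : ∀ i, 0 < θ i)
    (hne : ∃ y : Fin k → ℝ, (∀ i, Fᵀ.mulVec y i ≤ w i) ∧ 1 ≤ τ ⬝ᵥ y ∧ (∀ i, 0 ≤ y i))
    (β : ℝ)
    (hβ : ∀ i : Fin k, ∀ y : Fin k → ℝ,
      (∀ j, Fᵀ.mulVec y j ≤ w j) → 1 ≤ τ ⬝ᵥ y → (∀ j, 0 ≤ y j) →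
      (fun a => (θ i)⁻¹ * Q a i + d a) ⬝ᵥ y + (θ i)⁻¹ * d i ≤ β) :
    ∃ (Λ₀ : Fin k → ℝ) (Λ : Matrix (Fin k) (Fin m) ℝ),
      (∀ a, 0 ≤ Λ₀ a) ∧ (∀ a b, 0 ≤ Λ a b) ∧
      (∀ a b, Q a b ≤
        (-vecMulVec Λ₀ τ - vecMulVec τ Λ₀ + Λ * Fᵀ + F * Λᵀ
          - (1 / 2 : ℝ) • (vecMulVec d θ + vecMulVec θ d)) a b) ∧
      (∀ a, d a ≤ β * θ a + 2 * Λ₀ a - 2 * Λ.mulVec w a) :=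
  konno_bound_lp_relaxation_general Q hQ d F w τ θ hθ hne β hβ
end

section
/- Let k, m ≥ 1, Q ∈ ℝ^{k×k} symmetric, d ∈ ℝ^k, F ∈ ℝ^{k×m}, w ∈ ℝ^m, and τ, θ ∈ ℝ^k. Suppose Λ₀, Λ_{m+1} ∈ ℝ^k with Λ₀ ≥ 0 and Λ_{m+1} ≥ 0, Λ ∈ ℝ^{k×m} with all entries nonnegative, α₀ ≥ 0, α ∈ ℝ^m with α ≥ 0, and β ≥ 0 satisfy, entrywise, Q ≤ −Λ₀τᵀ − τΛ₀ᵀ + ΛFᵀ + FΛᵀ + Λ_{m+1}θᵀ + θΛ_{m+1}ᵀ, and componentwise, 2d − 2Λ₀ + 2Λw + 2Λ_{m+1} ≤ −α₀τ + Fα + βθ. Then for every y ∈ ℝ^k with Fᵀy ≤ w, τᵀy ≥ 1, θᵀy ≤ 1, and y ≥ 0, one has yᵀQy + 2dᵀy ≤ −α₀ + αᵀw + β. (This is the weak-duality half of the proposition stating φ̄ᴷ_{τ,θ} ≥ φ̄ᴸ_{τ,θ} ≥ φ*_{τ,θ}: every feasible solution of the extended LP (prob:konnoQP2e) yields a valid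 upper bound on the quadratic maximum over R_τ ∩ Δ(θ).) -/
open Matrix

noncomputable section

lemma aux_vecMulVec_quad {k : ℕ} (u v y : Fin k → ℝ) :
    y ⬝ᵥ (vecMulVec u v) *ᵥ y = (u ⬝ᵥ y) * (v ⬝ᵥ y) := by
  have h : (vecMulVec u v) *ᵥ y = fun i => u i * (v ⬝ᵥ y) := by
    funext i
    simp [vecMulVec, mulVec, dotProduct, Finset.mul_sum, mul_assoc]
  rw [h]
  show ∑ i, y i * (u i * (v ⬝ᵥ y)) = _
  rw [show (u ⬝ᵥ y) * (v ⬝ᵥ y) = ∑ i, (u i * y i) * (v ⬝ᵥ y) from by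
    rw [← Finset.sum_mul]; rfl]
  exact Finset.sum_congr rfl fun i _ => by ring

lemma aux_dot_nonneg {k : ℕ} (u y : Fin k → ℝ) (hu : ∀ i, 0 ≤ u i)
    (hy : ∀ i, 0 ≤ y i) : 0 ≤ u ⬝ᵥ y := by
  apply Finset.sum_nonneg
  intro i _
  exact mul_nonneg (hu i) (hy i)

/-- weak duality for the extended LP relaxation: every feasible solution
of the extended LP yields a valid upper bound on the quadratic over `R_τ ∩ Δ(θ)`. -/
theorem extended_lp_weak_duality {k m : ℕ} (hk : 1 ≤ k) (hm : 1 ≤ m)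
    (Q : Matrix (Fin k) (Fin k) ℝ) (hQ : Q.IsSymm) (d : Fin k → ℝ)
    (F : Matrix (Fin k) (Fin m) ℝ) (w : Fin m → ℝ) (τ θ : Fin k → ℝ)
    (Λ₀ Λm1 : Fin k → ℝ) (hΛ₀ : ∀ i, 0 ≤ Λ₀ i) (hΛm1 : ∀ i, 0 ≤ Λm1 i)
    (Λ : Matrix (Fin k) (Fin m) ℝ) (hΛ : ∀ i j, 0 ≤ Λ i j)
    (α₀ : ℝ) (hα₀ : 0 ≤ α₀) (α : Fin m → ℝ) (hα : ∀ i, 0 ≤ α i)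
    (β : ℝ) (hβ : 0 ≤ β)
    (hmat : ∀ a b, Q a b ≤
      (-vecMulVec Λ₀ τ - vecMulVec τ Λ₀ + Λ * Fᵀ + F * Λᵀ
        + vecMulVec Λm1 θ + vecMulVec θ Λm1) a b)
    (hvec : ∀ a, 2 * d a - 2 * Λ₀ a + 2 * Λ.mulVec w a + 2 * Λm1 a
        ≤ -α₀ * τ a + F.mulVec α a + β * θ a) :
    ∀ y : Fin k → ℝ, (∀ i, Fᵀ.mulVec y i ≤ w i) → 1 ≤ τ ⬝ᵥ y → θ ⬝ᵥ y ≤ 1 →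
      (∀ i, 0 ≤ y i) →
      y ⬝ᵥ Q.mulVec y + 2 * (d ⬝ᵥ y) ≤ -α₀ + α ⬝ᵥ w + β := by
  intro y hF hτ hθ hy
  set M : Matrix (Fin k) (Fin k) ℝ :=
    -vecMulVec Λ₀ τ - vecMulVec τ Λ₀ + Λ * Fᵀ + F * Λᵀ
      + vecMulVec Λm1 θ + vecMulVec θ Λm1 with hM
  -- step 1
  have h1 : y ⬝ᵥ Q *ᵥ y ≤ y ⬝ᵥ M *ᵥ y := by
    unfold dotProduct mulVec
    apply Finset.sum_le_sum
    intro i _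
    simp only [dotProduct]
    rw [Finset.mul_sum, Finset.mul_sum]
    apply Finset.sum_le_sum
    intro j _
    have := hmat i j
    nlinarith [hy i, hy j, mul_le_mul_of_nonneg_left this (hy i)]
  -- step 2 : expand M
  have hZ : ∀ i, 0 ≤ (Λᵀ *ᵥ y) i := by
    intro i
    simp only [mulVec, dotProduct, transpose_apply]
    exact Finset.sum_nonneg fun j _ => mul_nonneg (hΛ j i) (hy j)
  have h2 : y ⬝ᵥ M *ᵥ y =
      -((Λ₀ ⬝ᵥ y) * (τ ⬝ᵥ y)) - (τ ⬝ᵥ y) * (Λ₀ ⬝ᵥ y)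
      + (Λᵀ *ᵥ y) ⬝ᵥ (Fᵀ *ᵥ y) + (Fᵀ *ᵥ y) ⬝ᵥ (Λᵀ *ᵥ y)
      + (Λm1 ⬝ᵥ y) * (θ ⬝ᵥ y) + (θ ⬝ᵥ y) * (Λm1 ⬝ᵥ y) := by
    rw [hM]
    simp only [add_mulVec, sub_mulVec, neg_mulVec, dotProduct_add, dotProduct_sub,
      dotProduct_neg, aux_vecMulVec_quad]
    have e1 : y ⬝ᵥ (Λ * Fᵀ) *ᵥ y = (Λᵀ *ᵥ y) ⬝ᵥ (Fᵀ *ᵥ y) := by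
      rw [← mulVec_mulVec, dotProduct_mulVec, ← mulVec_transpose]
    have e2 : y ⬝ᵥ (F * Λᵀ) *ᵥ y = (Fᵀ *ᵥ y) ⬝ᵥ (Λᵀ *ᵥ y) := by
      rw [← mulVec_mulVec, dotProduct_mulVec, ← mulVec_transpose]
    rw [e1, e2]
  -- bound the cross term
  have h3 : (Λᵀ *ᵥ y) ⬝ᵥ (Fᵀ *ᵥ y) ≤ (Λᵀ *ᵥ y) ⬝ᵥ w := by
    apply Finset.sum_le_sum
    intro i _
    exact mul_le_mul_of_nonneg_left (hF i) (hZ i)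
  have h3' : (Λᵀ *ᵥ y) ⬝ᵥ w = y ⬝ᵥ (Λ *ᵥ w) := by
    rw [mulVec_transpose, ← dotProduct_mulVec]
  -- step 4 : sum hvec against y
  have h4 : 2 * (d ⬝ᵥ y) - 2 * (Λ₀ ⬝ᵥ y) + 2 * (y ⬝ᵥ (Λ *ᵥ w)) + 2 * (Λm1 ⬝ᵥ y)
      ≤ -α₀ * (τ ⬝ᵥ y) + (F *ᵥ α) ⬝ᵥ y + β * (θ ⬝ᵥ y) := by
    have key := Finset.sum_le_sum (fun a (_ : a ∈ Finset.univ) =>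
      mul_le_mul_of_nonneg_right (hvec a) (hy a))
    have lhs_eq : 2 * (d ⬝ᵥ y) - 2 * (Λ₀ ⬝ᵥ y) + 2 * (y ⬝ᵥ (Λ *ᵥ w)) + 2 * (Λm1 ⬝ᵥ y)
        = ∑ a, (2 * d a - 2 * Λ₀ a + 2 * (Λ *ᵥ w) a + 2 * Λm1 a) * y a := by
      simp only [dotProduct, Finset.mul_sum, ← Finset.sum_add_distrib,
        ← Finset.sum_sub_distrib]
      exact Finset.sum_congr rfl fun a _ => by ring
    have rhs_eq : -α₀ * (τ ⬝ᵥ y) + (F *ᵥ α) ⬝ᵥ y + β * (θ ⬝ᵥ y)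
        = ∑ a, (-α₀ * τ a + (F *ᵥ α) a + β * θ a) * y a := by
      simp only [dotProduct, Finset.mul_sum, ← Finset.sum_add_distrib]
      exact Finset.sum_congr rfl fun a _ => by ring
    rw [lhs_eq, rhs_eq]
    exact key
  have h5 : (F *ᵥ α) ⬝ᵥ y ≤ α ⬝ᵥ w := by
    have e : (F *ᵥ α) ⬝ᵥ y = α ⬝ᵥ (Fᵀ *ᵥ y) := by
      rw [dotProduct_comm, dotProduct_mulVec, ← mulVec_transpose, dotProduct_comm]
    rw [e]
    apply Finset.sum_le_sum
    intro i _
    exact mul_le_mul_of_nonneg_left (hF i) (hα i)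
  have ha0 : 0 ≤ Λ₀ ⬝ᵥ y := aux_dot_nonneg _ _ hΛ₀ hy
  have ha1 : 0 ≤ Λm1 ⬝ᵥ y := aux_dot_nonneg _ _ hΛm1 hy
  have hdc : (Fᵀ *ᵥ y) ⬝ᵥ (Λᵀ *ᵥ y) = (Λᵀ *ᵥ y) ⬝ᵥ (Fᵀ *ᵥ y) := dotProduct_comm _ _
  nlinarith [h1, h2, h3, h4, h5, h3', hdc, mul_le_mul_of_nonneg_left hθ hβ,
    mul_le_mul_of_nonneg_left hτ hα₀, mul_le_mul_of_nonneg_left hτ ha0,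
    mul_le_mul_of_nonneg_left hθ ha1]
end
end

section
/- Let k, m ≥ 1, Q ∈ ℝ^{k×k} symmetric, d ∈ ℝ^k, v ∈ ℝ, F ∈ ℝ^{k×m}, w ∈ ℝ^m, and τ, θ ∈ ℝ^k with τ ≥ 0 and θ ≥ 0 componentwise. Define F̂ := [F θ −τ] ∈ ℝ^{k×(m+2)} and ŵ := (w; 1; −1) ∈ ℝ^{m+2}. Suppose Λ₀, Λ_{m+1} ∈ ℝ^k with Λ₀ ≥ 0 and Λ_{m+1} ≥ 0, Λ ∈ ℝ^{k×m} with all entries nonnegative, α₀ ≥ 0, α ∈ ℝ^m with α ≥ 0, and β ≥ 0 satisfy, entrywise, Q ≤ −Λ₀τᵀ − τΛ₀ᵀ + ΛFᵀ + FΛᵀ + Λ_{m+1}θᵀ + θΛ_{m+1}ᵀ, and componentwise, 2d − 2Λ₀ + 2Λw + 2Λ_{m+1} ≤ −α₀τ + Fα + βθ. Then for every pair (Y, y) that is Shor-feasible for the data (F̂, ŵ), one has ⟨Q, Y⟩ + 2dᵀy ≤ −α₀ + αᵀw + β. (This is the key inequality φ̄ᴰ_{τ,θ} ≤ φ̄ᴸ_{τ,θ}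 of the theorem comparing Konno's bound, the LP relaxation bound, and the DNN relaxation bound: φ̄ᴷ_{τ,θ} ≥ φ̄ᴸ_{τ,θ} ≥ φ̄ᴰ_{τ,θ} ≥ φ*_{τ,θ}.) -/
open Matrix

noncomputable section

/-- `F̂ := [F θ −τ]`: `F` with the columns `θ` and `−τ` appended. -/
def Fhat {k m : ℕ} (F : Matrix (Fin k) (Fin m) ℝ) (τ θ : Fin k → ℝ) :
    Matrix (Fin k) (Fin m ⊕ Fin 2) ℝ :=
  Matrix.of fun a j => Sum.elim (fun i => F a i) (fun b => if b = 0 then θ a else -τ a) j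

/-- `ŵ := (w; 1; −1)`. -/
def what {m : ℕ} (w : Fin m → ℝ) : Fin m ⊕ Fin 2 → ℝ :=
  Sum.elim w (fun b => if b = 0 then (1 : ℝ) else -1)

/-- the key inequality `φ̄ᴰ_{τ,θ} ≤ φ̄ᴸ_{τ,θ}`: every feasible solution of the
extended LP bounds the Shor/DNN relaxation value of the cut problem. -/
theorem dnn_bound_le_lp_bound {k m : ℕ} (hk : 1 ≤ k) (hm : 1 ≤ m)
    (Q : Matrix (Fin k) (Fin k) ℝ) (hQ : Q.IsSymm) (d : Fin k → ℝ) (v : ℝ)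
    (F : Matrix (Fin k) (Fin m) ℝ) (w : Fin m → ℝ)
    (τ θ : Fin k → ℝ) (hτ : ∀ i, 0 ≤ τ i) (hθ : ∀ i, 0 ≤ θ i)
    (Λ₀ Λm1 : Fin k → ℝ) (hΛ₀ : ∀ i, 0 ≤ Λ₀ i) (hΛm1 : ∀ i, 0 ≤ Λm1 i)
    (Λ : Matrix (Fin k) (Fin m) ℝ) (hΛ : ∀ i j, 0 ≤ Λ i j)
    (α₀ : ℝ) (hα₀ : 0 ≤ α₀) (α : Fin m → ℝ) (hα : ∀ i, 0 ≤ α i)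
    (β : ℝ) (hβ : 0 ≤ β)
    (hmat : ∀ a b, Q a b ≤
      (-vecMulVec Λ₀ τ - vecMulVec τ Λ₀ + Λ * Fᵀ + F * Λᵀ
        + vecMulVec Λm1 θ + vecMulVec θ Λm1) a b)
    (hvec : ∀ a, 2 * d a - 2 * Λ₀ a + 2 * Λ.mulVec w a + 2 * Λm1 a
        ≤ -α₀ * τ a + F.mulVec α a + β * θ a) :
    ∀ (Y : Matrix (Fin k) (Fin k) ℝ) (y : Fin k → ℝ), Y.IsSymm →
      ShorFeasible (Fhat F τ θ) (what w) Y y →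
      frob Q Y + 2 * (d ⬝ᵥ y) ≤ -α₀ + α ⬝ᵥ w + β := by

  intro Y y hYs hfeas
  obtain ⟨h1, h2, -, h4, h5, -⟩ := hfeas
  have hsym : ∀ a b, Y b a = Y a b := fun a b => by
    simpa using congrFun (congrFun hYs a) b
  -- row constraints F̂ᵀ y ≤ ŵ
  have hFy : ∀ j, (∑ c, F c j * y c) ≤ w j := fun j => by
    simpa [Fhat, what, Matrix.mulVec, dotProduct] using h1 (Sum.inl j)
  have hθy : (∑ c, θ c * y c) ≤ 1 := by
    simpa [Fhat, what, Matrix.mulVec, dotProduct] using h1 (Sum.inr 0)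
  have hτy : 1 ≤ ∑ c, τ c * y c := by
    have h := h1 (Sum.inr 1)
    simp [Fhat, what, Matrix.mulVec, dotProduct] at h
    have e : (∑ c, -τ c * y c) = -∑ c, τ c * y c := by
      rw [← Finset.sum_neg_distrib]
      exact Finset.sum_congr rfl fun c _ => by ring
    -- h : ∑ c, -τ c * y c ≤ -1 (in some simp-normal form)
    nlinarith [h, e]
  -- entries of ŵ yᵀ − F̂ᵀ Y are nonnegative
  have h5F : ∀ j a, (∑ c, F c j * Y c a) ≤ w j * y a := fun j a => by
    have h := h5 (Sum.inl j) a
    simp [Fhat, what, Matrix.vecMulVec_apply, Matrix.mul_apply, Matrix.sub_apply] at h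
    linarith
  have h5θ : ∀ a, (∑ c, θ c * Y c a) ≤ y a := fun a => by
    have h := h5 (Sum.inr 0) a
    simp [Fhat, what, Matrix.vecMulVec_apply, Matrix.mul_apply, Matrix.sub_apply] at h
    linarith
  have h5τ : ∀ a, y a ≤ ∑ c, τ c * Y c a := fun a => by
    have h := h5 (Sum.inr 1) a
    simp [Fhat, what, Matrix.vecMulVec_apply, Matrix.mul_apply, Matrix.sub_apply] at h
    have e : (∑ c, -τ c * Y c a) = -∑ c, τ c * Y c a := by
      rw [← Finset.sum_neg_distrib]
      exact Finset.sum_congr rfl fun c _ => by ring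
    nlinarith [h, e]
  have hYτ : ∀ a, y a ≤ ∑ b, Y a b * τ b := fun a => by
    have e : (∑ c, τ c * Y c a) = ∑ b, Y a b * τ b :=
      Finset.sum_congr rfl fun b _ => by rw [hsym a b]; exact mul_comm _ _
    exact e ▸ h5τ a
  have hYθ : ∀ a, (∑ b, Y a b * θ b) ≤ y a := fun a => by
    have e : (∑ c, θ c * Y c a) = ∑ b, Y a b * θ b :=
      Finset.sum_congr rfl fun b _ => by rw [hsym a b]; exact mul_comm _ _
    exact e ▸ h5θ a
  have hYF : ∀ a j, (∑ b, Y a b * F b j) ≤ w j * y a := fun a j => by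
    have e : (∑ c, F c j * Y c a) = ∑ b, Y a b * F b j :=
      Finset.sum_congr rfl fun b _ => by rw [hsym a b]; exact mul_comm _ _
    exact e ▸ h5F j a
  -- Frobenius product as double sum
  have hfrob : frob Q Y = ∑ a, ∑ b, Q a b * Y a b := by
    simp only [frob, Matrix.trace, Matrix.diag_apply, Matrix.mul_apply,
      Matrix.transpose_apply]
    exact Finset.sum_comm
  -- step 1: bound frob Q Y by the dual matrix
  have step1 : frob Q Y ≤ ∑ a, ∑ b,
      ((-vecMulVec Λ₀ τ - vecMulVec τ Λ₀ + Λ * Fᵀ + F * Λᵀ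
        + vecMulVec Λm1 θ + vecMulVec θ Λm1) a b) * Y a b := by
    rw [hfrob]
    exact Finset.sum_le_sum fun a _ => Finset.sum_le_sum fun b _ =>
      mul_le_mul_of_nonneg_right (hmat a b) (h4 a b)
  -- conversion lemmas for the pieces
  have cS1 : (∑ a, ∑ b, Λ₀ a * τ b * Y a b) = ∑ a, Λ₀ a * ∑ b, Y a b * τ b :=
    Finset.sum_congr rfl fun a _ => by
      rw [Finset.mul_sum]; exact Finset.sum_congr rfl fun b _ => by ring
  have cS1' : (∑ a, ∑ b, τ a * Λ₀ b * Y a b) = ∑ a, Λ₀ a * ∑ b, Y a b * τ b := by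
    rw [Finset.sum_comm]
    refine Finset.sum_congr rfl fun a _ => ?_
    rw [Finset.mul_sum]
    refine Finset.sum_congr rfl fun b _ => ?_
    rw [hsym a b]; ring
  have cS3 : (∑ a, ∑ b, Λm1 a * θ b * Y a b) = ∑ a, Λm1 a * ∑ b, Y a b * θ b :=
    Finset.sum_congr rfl fun a _ => by
      rw [Finset.mul_sum]; exact Finset.sum_congr rfl fun b _ => by ring
  have cS3' : (∑ a, ∑ b, θ a * Λm1 b * Y a b) = ∑ a, Λm1 a * ∑ b, Y a b * θ b := by
    rw [Finset.sum_comm]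
    refine Finset.sum_congr rfl fun a _ => ?_
    rw [Finset.mul_sum]
    refine Finset.sum_congr rfl fun b _ => ?_
    rw [hsym a b]; ring
  have cS2 : (∑ a, ∑ b, (Λ * Fᵀ) a b * Y a b)
      = ∑ a, ∑ j, Λ a j * ∑ b, Y a b * F b j := by
    refine Finset.sum_congr rfl fun a _ => ?_
    simp only [Matrix.mul_apply, Matrix.transpose_apply, Finset.sum_mul]
    rw [Finset.sum_comm]
    refine Finset.sum_congr rfl fun j _ => ?_
    rw [Finset.mul_sum]
    exact Finset.sum_congr rfl fun b _ => by ring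
  have cS2' : (∑ a, ∑ b, (F * Λᵀ) a b * Y a b)
      = ∑ a, ∑ j, Λ a j * ∑ b, Y a b * F b j := by
    rw [Finset.sum_comm]
    refine Finset.sum_congr rfl fun a _ => ?_
    simp only [Matrix.mul_apply, Matrix.transpose_apply, Finset.sum_mul]
    rw [Finset.sum_comm]
    refine Finset.sum_congr rfl fun j _ => ?_
    rw [Finset.mul_sum]
    refine Finset.sum_congr rfl fun b _ => ?_
    rw [hsym a b]; ring
  have eqR : (∑ a, ∑ b,
      ((-vecMulVec Λ₀ τ - vecMulVec τ Λ₀ + Λ * Fᵀ + F * Λᵀ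
        + vecMulVec Λm1 θ + vecMulVec θ Λm1) a b) * Y a b)
      = -2 * (∑ a, Λ₀ a * ∑ b, Y a b * τ b)
        + 2 * (∑ a, ∑ j, Λ a j * ∑ b, Y a b * F b j)
        + 2 * (∑ a, Λm1 a * ∑ b, Y a b * θ b) := by
    have split : (∑ a, ∑ b,
        ((-vecMulVec Λ₀ τ - vecMulVec τ Λ₀ + Λ * Fᵀ + F * Λᵀ
          + vecMulVec Λm1 θ + vecMulVec θ Λm1) a b) * Y a b)
        = -(∑ a, ∑ b, Λ₀ a * τ b * Y a b) - (∑ a, ∑ b, τ a * Λ₀ b * Y a b)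
          + (∑ a, ∑ b, (Λ * Fᵀ) a b * Y a b) + (∑ a, ∑ b, (F * Λᵀ) a b * Y a b)
          + (∑ a, ∑ b, Λm1 a * θ b * Y a b) + (∑ a, ∑ b, θ a * Λm1 b * Y a b) := by
      simp only [Matrix.sub_apply, Matrix.add_apply, Matrix.neg_apply,
        Matrix.vecMulVec_apply, sub_mul, add_mul, neg_mul,
        Finset.sum_add_distrib, Finset.sum_sub_distrib, Finset.sum_neg_distrib]
    rw [split, cS1, cS1', cS2, cS2', cS3, cS3']
    ring
  -- step 2: bound 2 dᵀ y
  have hd : 2 * (d ⬝ᵥ y) ≤ ∑ a, (-α₀ * τ a + F.mulVec α a + β * θ a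
      + 2 * Λ₀ a - 2 * Λ.mulVec w a - 2 * Λm1 a) * y a := by
    have e : 2 * (d ⬝ᵥ y) = ∑ a, (2 * d a) * y a := by
      simp only [dotProduct, Finset.mul_sum]
      exact Finset.sum_congr rfl fun a _ => by ring
    rw [e]
    refine Finset.sum_le_sum fun a _ => mul_le_mul_of_nonneg_right ?_ (h2 a)
    have := hvec a; linarith
  have tF : (∑ a, (F.mulVec α a) * y a) = ∑ j, α j * ∑ c, F c j * y c := by
    simp only [Matrix.mulVec, dotProduct, Finset.sum_mul]
    rw [Finset.sum_comm]
    refine Finset.sum_congr rfl fun j _ => ?_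
    rw [Finset.mul_sum]
    exact Finset.sum_congr rfl fun c _ => by ring
  have tΛw : (∑ a, (Λ.mulVec w a) * y a) = ∑ a, ∑ j, Λ a j * (w j * y a) :=
    Finset.sum_congr rfl fun a _ => by
      simp only [Matrix.mulVec, dotProduct, Finset.sum_mul]
      exact Finset.sum_congr rfl fun j _ => by ring
  have eqV : (∑ a, (-α₀ * τ a + F.mulVec α a + β * θ a
      + 2 * Λ₀ a - 2 * Λ.mulVec w a - 2 * Λm1 a) * y a)
      = -α₀ * (∑ c, τ c * y c) + (∑ j, α j * ∑ c, F c j * y c)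
        + β * (∑ c, θ c * y c) + 2 * (∑ a, Λ₀ a * y a)
        - 2 * (∑ a, ∑ j, Λ a j * (w j * y a)) - 2 * (∑ a, Λm1 a * y a) := by
    have e : (∑ a, (-α₀ * τ a + F.mulVec α a + β * θ a
        + 2 * Λ₀ a - 2 * Λ.mulVec w a - 2 * Λm1 a) * y a)
        = (∑ a, -(α₀ * (τ a * y a))) + (∑ a, (F.mulVec α a) * y a)
          + (∑ a, β * (θ a * y a)) + (∑ a, 2 * (Λ₀ a * y a))
          - (∑ a, 2 * ((Λ.mulVec w a) * y a)) - (∑ a, 2 * (Λm1 a * y a)) := by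
      simp only [← Finset.sum_add_distrib, ← Finset.sum_sub_distrib]
      exact Finset.sum_congr rfl fun a _ => by ring
    rw [e, ← Finset.mul_sum, ← Finset.mul_sum, ← Finset.mul_sum, ← Finset.mul_sum,
      Finset.sum_neg_distrib, ← Finset.mul_sum, tF, tΛw]
    ring
  -- final scalar bounds
  have hτb : -α₀ * (∑ c, τ c * y c) ≤ -α₀ := by nlinarith [hτy, hα₀]
  have hθb : β * (∑ c, θ c * y c) ≤ β := by nlinarith [hθy, hβ]
  have hαb : (∑ j, α j * ∑ c, F c j * y c) ≤ α ⬝ᵥ w := by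
    have e : α ⬝ᵥ w = ∑ j, α j * w j := rfl
    rw [e]
    exact Finset.sum_le_sum fun j _ => mul_le_mul_of_nonneg_left (hFy j) (hα j)
  have hA1 : (∑ a, Λ₀ a * y a) ≤ ∑ a, Λ₀ a * ∑ b, Y a b * τ b :=
    Finset.sum_le_sum fun a _ => mul_le_mul_of_nonneg_left (hYτ a) (hΛ₀ a)
  have hA2 : (∑ a, ∑ j, Λ a j * ∑ b, Y a b * F b j) ≤ ∑ a, ∑ j, Λ a j * (w j * y a) :=
    Finset.sum_le_sum fun a _ => Finset.sum_le_sum fun j _ =>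
      mul_le_mul_of_nonneg_left (hYF a j) (hΛ a j)
  have hA3 : (∑ a, Λm1 a * ∑ b, Y a b * θ b) ≤ ∑ a, Λm1 a * y a :=
    Finset.sum_le_sum fun a _ => mul_le_mul_of_nonneg_left (hYθ a) (hΛm1 a)
  linarith [step1, eqR, hd, eqV, hτb, hθb, hαb, hA1, hA2, hA3]
end
end

section
/- Let H ∈ ℝ^{n×n} be symmetric positive semidefinite and p ∈ ℝⁿ, with Φ(x) := xᵀHx + 2pᵀx and Ψ(x, x̃) := xᵀHx̃ + pᵀx + pᵀx̃. Then for every subset 𝒳 ⊆ ℝⁿ and every M ∈ ℝ, M is an upper bound of {Φ(x) : x ∈ 𝒳} if and only if M is an upper bound of {Ψ(x, x̃) : x ∈ 𝒳, x̃ ∈ 𝒳}. In particular, the supremum of Φ over 𝒳 equals the supremum of Ψ over 𝒳 × 𝒳 (Konno's theorem reducing the concave QP to a bilinear program). -/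
/-! Positive semidefiniteness gives Φ(x) + Φ(x̃) - 2Ψ(x, x̃) = (x - x̃)ᵀH(x - x̃) ≥ 0, so
Ψ(x, x̃) ≤ max (Φ x) (Φ x̃), while Ψ(x, x) = Φ(x). Every value of Ψ on 𝒳 × 𝒳 is therefore
dominated by a value of Φ on 𝒳 and conversely, which forces equal upper bounds and equal suprema. -/

open Matrix

namespace Matrix

variable {m R : Type*} [Fintype m] [CommRing R]

theorem IsSymm.dotProduct_mulVec_comm {H : Matrix m m R} (hH : H.IsSymm) (x y : m → R) :
    x ⬝ᵥ H *ᵥ y = y ⬝ᵥ H *ᵥ x := by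
  rw [dotProduct_mulVec, ← mulVec_transpose, hH.eq, dotProduct_comm]

theorem PosSemidef.two_mul_dotProduct_mulVec_le [PartialOrder R] [IsOrderedAddMonoid R]
    [StarRing R] [TrivialStar R] {H : Matrix m m R} (hH : H.PosSemidef) (x y : m → R) :
    2 * (x ⬝ᵥ H *ᵥ y) ≤ x ⬝ᵥ H *ᵥ x + y ⬝ᵥ H *ᵥ y := by
  have hsymm : H.IsSymm := isHermitian_iff_isSymm.mp hH.1
  have hdiff := hH.dotProduct_mulVec_nonneg (x - y)
  rw [star_trivial, mulVec_sub, sub_dotProduct, dotProduct_sub, dotProduct_sub,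
    hsymm.dotProduct_mulVec_comm y x] at hdiff
  rw [← sub_nonneg]
  convert hdiff using 1
  ring

end Matrix

section

variable {α β : Type*} {f : α → β} {g : α → α → β}

theorem forall_le_iff_forall_forall_le_of_le_max [LinearOrder β] (hdiag : ∀ x, g x x = f x)
    (hle : ∀ x y, g x y ≤ max (f x) (f y)) (X : Set α) (M : β) :
    (∀ x ∈ X, f x ≤ M) ↔ ∀ x ∈ X, ∀ y ∈ X, g x y ≤ M :=
  ⟨fun h x hx y hy => (hle x y).trans (max_le (h x hx) (h y hy)),
    fun h x hx => hdiag x ▸ h x hx x hx⟩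

theorem csSup_image_eq_csSup_image_prod_of_le_max [ConditionallyCompleteLinearOrder β]
    (hdiag : ∀ x, g x x = f x) (hle : ∀ x y, g x y ≤ max (f x) (f y)) (X : Set α) :
    sSup (f '' X) = sSup ((fun q : α × α => g q.1 q.2) '' X ×ˢ X) := by
  apply csSup_eq_csSup_of_forall_exists_le
  · rintro _ ⟨x, hx, rfl⟩
    exact ⟨_, ⟨(x, x), ⟨hx, hx⟩, rfl⟩, (hdiag x).ge⟩
  · rintro _ ⟨⟨x, y⟩, ⟨hx, hy⟩, rfl⟩
    rcases le_total (f x) (f y) with hxy | hyx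
    · exact ⟨f y, ⟨y, hy, rfl⟩, (hle x y).trans (max_eq_right hxy).le⟩
    · exact ⟨f x, ⟨x, hx, rfl⟩, (hle x y).trans (max_eq_left hyx).le⟩

end

/-- Konno's theorem reducing the concave QP to a bilinear program: over any
set `𝒳`, the upper bounds of `Φ` on `𝒳` coincide with the upper bounds of `Ψ` on `𝒳 × 𝒳`,
and the suprema agree. -/
theorem quadratic_sup_eq_bilinear_sup {n : ℕ} (H : Matrix (Fin n) (Fin n) ℝ)
    (hH : H.PosSemidef) (p : Fin n → ℝ) (X : Set (Fin n → ℝ)) :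
    (∀ M : ℝ,
      (∀ x ∈ X, x ⬝ᵥ H.mulVec x + 2 * (p ⬝ᵥ x) ≤ M) ↔
      (∀ x ∈ X, ∀ xt ∈ X, x ⬝ᵥ H.mulVec xt + p ⬝ᵥ x + p ⬝ᵥ xt ≤ M)) ∧
    sSup ((fun x => x ⬝ᵥ H.mulVec x + 2 * (p ⬝ᵥ x)) '' X) =
      sSup ((fun q : (Fin n → ℝ) × (Fin n → ℝ) =>
        q.1 ⬝ᵥ H.mulVec q.2 + p ⬝ᵥ q.1 + p ⬝ᵥ q.2) '' (X ×ˢ X)) := by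
  set Φ : (Fin n → ℝ) → ℝ := fun x => x ⬝ᵥ H *ᵥ x + 2 * (p ⬝ᵥ x)
  set Ψ : (Fin n → ℝ) → (Fin n → ℝ) → ℝ := fun x y => x ⬝ᵥ H *ᵥ y + p ⬝ᵥ x + p ⬝ᵥ y
  have hdiag : ∀ x, Ψ x x = Φ x := fun x => by simp only [Ψ, Φ]; ring
  have hle : ∀ x y, Ψ x y ≤ max (Φ x) (Φ y) := fun x y => by
    have := hH.two_mul_dotProduct_mulVec_le x y
    simp only [Ψ, Φ]
    linarith [le_max_left (Φ x) (Φ y), le_max_right (Φ x) (Φ y)]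
  exact ⟨forall_le_iff_forall_forall_le_of_le_max hdiag hle X,
    csSup_image_eq_csSup_image_prod_of_le_max hdiag hle X⟩
end

section
/- Let Q ∈ ℝ^{k×k} be symmetric positive semidefinite with Q_{ii} > 0 for every i, let d ∈ ℝ^k with d ≤ 0 componentwise, and let c > 0. Define τ ∈ ℝ^k by τ_i := Q_{ii} / (−d_i + √(d_i² + Q_{ii} c)). Then: (i) τ_i > 0 for every i; (ii) for each i, (τ_i^{−1})² Q_{ii} + 2 τ_i^{−1} d_i = c; and (iii) for every y ∈ ℝ^k with y ≥ 0 componentwise and τᵀy ≤ 1, one has yᵀQy + 2dᵀy ≤ c. (This establishes the validity of Tuy's cut: with c = v_R − δ − v, the maximum of φ(y) = yᵀQy + 2dᵀy + v over the simplex Δ(τ) equals v_R − δ < v_R.) -/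
/-!
The objective `y ↦ yᵀQy + 2dᵀy` is convex because `Q` is positive semidefinite, and `Δ(τ)` is the
convex hull of `0` and the vertices `τᵢ⁻¹ eᵢ`. A convex function attains its maximum over a convex
hull at one of the generating points; the objective vanishes at `0` and equals `c` at every other
vertex, since `τᵢ⁻¹` is the positive root of `Qᵢᵢ x² + 2dᵢ x = c`.
-/

open Matrix

theorem Matrix.PosSemidef.convexOn_dotProduct_mulVec {n : Type*} [Fintype n]
    {Q : Matrix n n ℝ} (hQ : Q.PosSemidef) :
    ConvexOn ℝ Set.univ fun y : n → ℝ => y ⬝ᵥ Q *ᵥ y := by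
  refine ⟨convex_univ, fun x _ y _ a b ha hb hab => ?_⟩
  have hxy := hQ.dotProduct_mulVec_nonneg (x - y)
  simp only [star_trivial, sub_dotProduct, mulVec_sub, dotProduct_sub] at hxy
  simp only [smul_eq_mul, mulVec_add, mulVec_smul, add_dotProduct, dotProduct_add,
    smul_dotProduct, dotProduct_smul]
  obtain rfl : b = 1 - a := by linarith
  -- the convexity gap is `a b (x - y)ᵀQ(x - y)`
  nlinarith [mul_nonneg (mul_nonneg ha hb) hxy]

theorem Matrix.PosSemidef.convexOn_dotProduct_mulVec_add {n : Type*} [Fintype n]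
    {Q : Matrix n n ℝ} (hQ : Q.PosSemidef) (d : n → ℝ) :
    ConvexOn ℝ Set.univ fun y : n → ℝ => y ⬝ᵥ Q *ᵥ y + 2 * (d ⬝ᵥ y) :=
  hQ.convexOn_dotProduct_mulVec.add
    (((dotProductBilin ℝ ℝ d).convexOn convex_univ).smul zero_le_two)

theorem mem_convexHull_insert_zero_range_smul_single {n : Type*} [Fintype n] [DecidableEq n]
    {τ y : n → ℝ} (hτ : ∀ i, 0 < τ i) (hy : ∀ i, 0 ≤ y i) (hτy : τ ⬝ᵥ y ≤ 1) :
    y ∈ convexHull ℝ (insert 0 (Set.range fun i => (τ i)⁻¹ • Pi.single i (1 : ℝ))) := by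
  let w : Option n → ℝ := fun o => o.elim (1 - τ ⬝ᵥ y) fun i => τ i * y i
  let p : Option n → n → ℝ := fun o => o.elim 0 fun i => (τ i)⁻¹ • Pi.single i 1
  have hwp : ∑ o, w o • p o = y := by
    simp only [Fintype.sum_option, w, p, Option.elim, smul_zero, zero_add, smul_smul]
    conv_rhs => rw [← Finset.univ_sum_single y]
    refine Finset.sum_congr rfl fun i _ => ?_
    rw [mul_right_comm, mul_inv_cancel₀ (hτ i).ne', one_mul, ← Pi.single_smul, smul_eq_mul,
      mul_one]
  rw [← hwp]
  refine (convex_convexHull ℝ _).sum_mem (fun o _ => ?_) ?_ (fun o _ => subset_convexHull ℝ _ ?_)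
  · cases o with
    | none => simpa [w] using hτy
    | some i => exact mul_nonneg (hτ i).le (hy i)
  · simp [Fintype.sum_option, w, dotProduct]
  · cases o with
    | none => exact Set.mem_insert _ _
    | some i => exact Set.mem_insert_of_mem _ ⟨i, rfl⟩

theorem neg_add_sqrt_sq_add_pos {a b : ℝ} (hb : 0 < b) : 0 < -a + √(a ^ 2 + b) := by
  have : a < √(a ^ 2 + b) :=
    calc a ≤ |a| := le_abs_self a
      _ = √(a ^ 2) := (Real.sqrt_sq_eq_abs a).symm
      _ < √(a ^ 2 + b) := Real.sqrt_lt_sqrt (sq_nonneg a) (by linarith)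
  linarith

theorem quadratic_eq_neg_add_sqrt_div {q d c : ℝ} (hq : q ≠ 0) (hdisc : 0 ≤ d ^ 2 + q * c) :
    ((-d + √(d ^ 2 + q * c)) / q) ^ 2 * q + 2 * ((-d + √(d ^ 2 + q * c)) / q) * d = c := by
  have hs := Real.sq_sqrt hdisc
  field_simp
  linear_combination hs

theorem tuy_cut_valid_general {k : ℕ}
    (Q : Matrix (Fin k) (Fin k) ℝ) (hQ : Q.PosSemidef) (hQd : ∀ i, 0 < Q i i)
    (d : Fin k → ℝ) (c : ℝ) (hc : 0 < c)
    (τ : Fin k → ℝ)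
    (hτdef : ∀ i, τ i = Q i i / (-d i + Real.sqrt ((d i) ^ 2 + Q i i * c))) :
    (∀ i, 0 < τ i) ∧
    (∀ i, ((τ i)⁻¹) ^ 2 * Q i i + 2 * (τ i)⁻¹ * d i = c) ∧
    (∀ y : Fin k → ℝ, (∀ i, 0 ≤ y i) → τ ⬝ᵥ y ≤ 1 →
      y ⬝ᵥ Q.mulVec y + 2 * (d ⬝ᵥ y) ≤ c) := by
  have hτ (i) : 0 < τ i :=
    hτdef i ▸ div_pos (hQd i) (neg_add_sqrt_sq_add_pos (mul_pos (hQd i) hc))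
  have hvertex (i) : ((τ i)⁻¹) ^ 2 * Q i i + 2 * (τ i)⁻¹ * d i = c := by
    rw [hτdef i, inv_div]
    exact quadratic_eq_neg_add_sqrt_div (hQd i).ne' (by have := hQd i; positivity)
  refine ⟨hτ, hvertex, fun y hy hτy => ?_⟩
  obtain ⟨v, hv, hyv⟩ := (hQ.convexOn_dotProduct_mulVec_add d).exists_ge_of_mem_convexHull
    (Set.subset_univ _) (mem_convexHull_insert_zero_range_smul_single hτ hy hτy)
  refine hyv.trans ?_
  rcases hv with rfl | ⟨i, rfl⟩
  · simpa using hc.le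
  · convert (hvertex i).le using 1
    simp only [mulVec_smul, mulVec_single, MulOpposite.op_one, one_smul, dotProduct_smul,
      smul_dotProduct, single_dotProduct, col_apply, one_mul, smul_eq_mul, dotProduct_single,
      mul_one, inv_pow]
    ring

/-- validity of Tuy's cut: with `τ_i = Q_ii / (−d_i + √(d_i² + Q_ii c))`,
the vector `τ` is positive, the vertices `τ_i⁻¹ e_i` of `Δ(τ)` have objective value
exactly `c`, and the quadratic is at most `c` on the whole simplex `Δ(τ)`. -/
theorem tuy_cut_valid {k : ℕ} (hk : 1 ≤ k)
    (Q : Matrix (Fin k) (Fin k) ℝ) (hQ : Q.PosSemidef) (hQd : ∀ i, 0 < Q i i)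
    (d : Fin k → ℝ) (hd : ∀ i, d i ≤ 0) (c : ℝ) (hc : 0 < c)
    (τ : Fin k → ℝ)
    (hτdef : ∀ i, τ i = Q i i / (-d i + Real.sqrt ((d i) ^ 2 + Q i i * c))) :
    (∀ i, 0 < τ i) ∧
    (∀ i, ((τ i)⁻¹) ^ 2 * Q i i + 2 * (τ i)⁻¹ * d i = c) ∧
    (∀ y : Fin k → ℝ, (∀ i, 0 ≤ y i) → τ ⬝ᵥ y ≤ 1 →
      y ⬝ᵥ Q.mulVec y + 2 * (d ⬝ᵥ y) ≤ c) :=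
  tuy_cut_valid_general Q hQ hQd d c hc τ hτdef
end
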